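/- arXiv:1804.10958 — 6 statements merged into one kernel-verified Lean document; each statement's English description precedes it below -/
import Mathlib

section
/- Let H : ℝ^{2n} → ℝ be smooth, let W ⊆ ℝ^r × ℝ^l be open, and let Σ : W → V be a smooth diffeomorphism onto an open set V ⊆ ℝ^{2n} such that for each λ the partial map σ_λ := Σ(·,λ) satisfies, at every x with (x,λ) ∈ W: ∇H(σ_λ(x)) ∈ Im(J·Dσ_λ(x)) and Dσ_λ(x)ᵀ·J·Dσ_λ(x) = 0. Define F = (F_1,...,F_l) := 𝔭 ∘ Σ^{-1} : V → ℝ^l, where 𝔭(x,λ) = λ. Then for every y ∈ V: DF(y) has rank l (the F_i are independent), {F_i,H}(y) = 0 for all i (the F_i are first integrals of H), and the kernel of the l×l matrix ({F_i,F_j}(y)) has dimension 2n−l (the F_i are isotropic). -/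
open Matrix

noncomputable def mjac {ι κ : Type*} [Fintype ι] [DecidableEq ι] [Fintype κ]
    (F : (ι → ℝ) → (κ → ℝ)) (x : ι → ℝ) : Matrix κ ι ℝ :=
  Matrix.of fun i j => fderiv ℝ F x (Pi.single j 1) i

noncomputable def mgrad {ι : Type*} [Fintype ι] [DecidableEq ι]
    (f : (ι → ℝ) → ℝ) (x : ι → ℝ) : ι → ℝ :=
  fun i => fderiv ℝ f x (Pi.single i 1)

def symJ (n : ℕ) : Matrix (Fin n ⊕ Fin n) (Fin n ⊕ Fin n) ℝ :=
  Matrix.fromBlocks 0 1 (-1) 0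

noncomputable def poisson {n : ℕ} (f g : ((Fin n ⊕ Fin n) → ℝ) → ℝ)
    (x : (Fin n ⊕ Fin n) → ℝ) : ℝ :=
  mgrad f x ⬝ᵥ (symJ n).mulVec (mgrad g x)

lemma mjac_mulVec {ι κ : Type*} [Fintype ι] [DecidableEq ι] [Fintype κ]
    (F : (ι → ℝ) → (κ → ℝ)) (x v : ι → ℝ) :
    (mjac F x).mulVec v = fderiv ℝ F x v := by
  have hv : v = ∑ j, v j • (Pi.single j (1:ℝ) : ι → ℝ) := by
    funext j'
    simp [Pi.single_apply, Finset.sum_apply]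
  conv_rhs => rw [hv, map_sum]
  funext i
  simp [mjac, Matrix.mulVec, dotProduct, Finset.sum_apply, mul_comm]

lemma symJ_mul_symJ (n : ℕ) : symJ n * symJ n = -1 := by
  unfold symJ
  rw [Matrix.fromBlocks_multiply]
  simp [← Matrix.fromBlocks_one, Matrix.fromBlocks_neg]

/-- A generalized complete solution `Σ` of the Hamilton–Jacobi equation for `H`
gives rise, via `F = 𝔭 ∘ Σ⁻¹`, to `l` independent isotropic first integrals of `H`. -/
theorem complete_solution_gives_isotropic_first_integrals
    (n r l : ℕ)
    (H : ((Fin n ⊕ Fin n) → ℝ) → ℝ) (hH : ContDiff ℝ (⊤ : ℕ∞) H)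
    (W : Set ((Fin r → ℝ) × (Fin l → ℝ))) (hW : IsOpen W)
    (V : Set ((Fin n ⊕ Fin n) → ℝ)) (hV : IsOpen V)
    (S : (Fin r → ℝ) × (Fin l → ℝ) → (Fin n ⊕ Fin n) → ℝ)
    (Sinv : ((Fin n ⊕ Fin n) → ℝ) → (Fin r → ℝ) × (Fin l → ℝ))
    (hS : ContDiffOn ℝ (⊤ : ℕ∞) S W)
    (hSinv : ContDiffOn ℝ (⊤ : ℕ∞) Sinv V)
    (hSmaps : ∀ w ∈ W, S w ∈ V)
    (hleft : ∀ w ∈ W, Sinv (S w) = w)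
    (hright : ∀ y ∈ V, Sinv y ∈ W ∧ S (Sinv y) = y)
    (hsol1 : ∀ x lam, (x, lam) ∈ W → mgrad H (S (x, lam)) ∈
      LinearMap.range (Matrix.mulVecLin (symJ n * mjac (fun y => S (y, lam)) x)))
    (hsol2 : ∀ x lam, (x, lam) ∈ W →
      (mjac (fun y => S (y, lam)) x)ᵀ * symJ n * mjac (fun y => S (y, lam)) x = 0) :
    ∀ y ∈ V,
      (mjac (fun z => (Sinv z).2) y).rank = l ∧
      (∀ i : Fin l, poisson (fun z => (Sinv z).2 i) H y = 0) ∧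
      Module.finrank ℝ (LinearMap.ker (Matrix.mulVecLin
        (Matrix.of fun i j : Fin l =>
          poisson (fun z => (Sinv z).2 i) (fun z => (Sinv z).2 j) y))) = 2 * n - l := by
  intro y hy
  obtain ⟨hw, hSw⟩ := hright y hy
  set w : (Fin r → ℝ) × (Fin l → ℝ) := Sinv y with hwdef
  set Φ : ((Fin r → ℝ) × (Fin l → ℝ)) →L[ℝ] ((Fin n ⊕ Fin n) → ℝ) := fderiv ℝ S w with hΦdef
  set Ψ : ((Fin n ⊕ Fin n) → ℝ) →L[ℝ] ((Fin r → ℝ) × (Fin l → ℝ)) := fderiv ℝ Sinv y with hΨdef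
  have hSdiff : HasFDerivAt S Φ w :=
    ((hS.contDiffAt (hW.mem_nhds hw)).differentiableAt (by simp)).hasFDerivAt
  have hΨdiff : HasFDerivAt Sinv Ψ y :=
    ((hSinv.contDiffAt (hV.mem_nhds hy)).differentiableAt (by simp)).hasFDerivAt
  have hSw' : HasFDerivAt Sinv Ψ (S w) := by rwa [hSw]
  -- Ψ ∘ Φ = id
  have hΨΦ : ∀ v, Ψ (Φ v) = v := by
    have hcomp : HasFDerivAt (Sinv ∘ S) (Ψ.comp Φ) w := hSw'.comp w hSdiff
    have hid : HasFDerivAt (Sinv ∘ S) (ContinuousLinearMap.id ℝ _) w := by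
      have h1 : Sinv ∘ S =ᶠ[nhds w] id := by
        filter_upwards [hW.mem_nhds hw] with z hz
        exact hleft z hz
      exact (hasFDerivAt_id w).congr_of_eventuallyEq h1
    have := hcomp.unique hid
    intro v
    calc Ψ (Φ v) = (Ψ.comp Φ) v := rfl
    _ = v := by rw [this]; rfl
  -- Φ ∘ Ψ = id
  have hΦΨ : ∀ u, Φ (Ψ u) = u := by
    have hcomp : HasFDerivAt (S ∘ Sinv) (Φ.comp Ψ) y := by
      exact HasFDerivAt.comp y hSdiff hΨdiff
    have hid : HasFDerivAt (S ∘ Sinv) (ContinuousLinearMap.id ℝ _) y := by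
      have h1 : S ∘ Sinv =ᶠ[nhds y] id := by
        filter_upwards [hV.mem_nhds hy] with z hz
        exact (hright z hz).2
      exact (hasFDerivAt_id y).congr_of_eventuallyEq h1
    have := hcomp.unique hid
    intro u
    calc Φ (Ψ u) = (Φ.comp Ψ) u := rfl
    _ = u := by rw [this]; rfl
  -- dimensions
  have hrl : r + l = 2 * n := by
    have e : ((Fin r → ℝ) × (Fin l → ℝ)) ≃ₗ[ℝ] ((Fin n ⊕ Fin n) → ℝ) :=
      LinearEquiv.ofLinear Φ.toLinearMap Ψ.toLinearMap
        (LinearMap.ext hΦΨ) (LinearMap.ext hΨΦ)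
    have := e.finrank_eq
    simpa [Module.finrank_prod, Module.finrank_fin_fun, Module.finrank_fintype_fun_eq_card,
      Fintype.card_sum, two_mul] using this
  -- matrices
  set F : ((Fin n ⊕ Fin n) → ℝ) → (Fin l → ℝ) := fun z => (Sinv z).2 with hFdef
  set G : Matrix (Fin l) (Fin n ⊕ Fin n) ℝ := mjac F y with hGdef
  set A : Matrix (Fin n ⊕ Fin n) (Fin r) ℝ := mjac (fun y' => S (y', w.2)) w.1 with hAdef
  have hFderiv : HasFDerivAt F ((ContinuousLinearMap.snd ℝ (Fin r → ℝ) (Fin l → ℝ)).comp Ψ) y :=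
    (ContinuousLinearMap.snd ℝ (Fin r → ℝ) (Fin l → ℝ)).hasFDerivAt.comp y hΨdiff
  have hG : ∀ v, G.mulVec v = (Ψ v).2 := by
    intro v
    rw [hGdef, mjac_mulVec, hFderiv.fderiv]
    rfl
  have hSw2 : HasFDerivAt S Φ (w.1, w.2) := by rwa [Prod.mk.eta]
  have hAderiv : HasFDerivAt (fun y' => S (y', w.2))
      (Φ.comp (ContinuousLinearMap.inl ℝ (Fin r → ℝ) (Fin l → ℝ))) w.1 :=
    hSw2.comp w.1 (hasFDerivAt_prodMk_left w.1 w.2)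
  have hA : ∀ v, A.mulVec v = Φ (v, 0) := by
    intro v
    rw [hAdef, mjac_mulVec, hAderiv.fderiv]
    rfl
  have hGA : G * A = 0 := by
    ext i j
    have h : (G * A).mulVec (Pi.single j 1) = 0 := by
      rw [← Matrix.mulVec_mulVec, hA, hG, hΨΦ]
    have := congrFun h i
    simpa using this
  have hGsurj : Function.Surjective G.mulVecLin := by
    intro u
    refine ⟨Φ (0, u), ?_⟩
    rw [Matrix.mulVecLin_apply, hG, hΨΦ]
  have hAinj : Function.Injective A.mulVecLin := by
    intro v v' h
    simp only [Matrix.mulVecLin_apply, hA] at h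
    have := congrArg Ψ h
    rw [hΨΦ, hΨΦ] at this
    exact congrArg Prod.fst this
  have hrangeG : LinearMap.range G.mulVecLin = ⊤ := LinearMap.range_eq_top.mpr hGsurj
  have hrankG : G.rank = l := by
    show Module.finrank ℝ (LinearMap.range G.mulVecLin) = l
    rw [hrangeG, finrank_top, Module.finrank_fintype_fun_eq_card, Fintype.card_fin]
  have hrankA : A.rank = r := by
    show Module.finrank ℝ (LinearMap.range A.mulVecLin) = r
    rw [LinearMap.finrank_range_of_inj hAinj, Module.finrank_fin_fun]
  have hww : ((w.1 : Fin r → ℝ), (w.2 : Fin l → ℝ)) ∈ W := by rwa [Prod.mk.eta]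
  have hsol2' : Aᵀ * symJ n * A = 0 := hsol2 w.1 w.2 hww
  have hsol1' : mgrad H y ∈ LinearMap.range (Matrix.mulVecLin (symJ n * A)) := by
    have := hsol1 w.1 w.2 hww
    rwa [Prod.mk.eta, hSw] at this
  -- gradient of components
  have hgradF : ∀ i : Fin l, mgrad (fun z => F z i) y = G i := by
    intro i
    have hdi : HasFDerivAt (fun z => F z i)
        ((ContinuousLinearMap.proj i).comp
          ((ContinuousLinearMap.snd ℝ (Fin r → ℝ) (Fin l → ℝ)).comp Ψ)) y :=
      hasFDerivAt_pi'.1 hFderiv i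
    funext j
    show fderiv ℝ (fun z => F z i) y (Pi.single j 1) = G i j
    rw [hdi.fderiv]
    show (Ψ (Pi.single j 1)).2 i = G i j
    have : G i j = fderiv ℝ F y (Pi.single j 1) i := rfl
    rw [this, hFderiv.fderiv]
    rfl
  -- first integrals
  have goal2 : ∀ i : Fin l, poisson (fun z => F z i) H y = 0 := by
    intro i
    obtain ⟨v, hv⟩ := hsol1'
    unfold poisson
    rw [hgradF i, ← hv, Matrix.mulVecLin_apply]
    have hc : (symJ n).mulVec ((symJ n * A).mulVec v) = -(A.mulVec v) := by
      rw [Matrix.mulVec_mulVec, ← Matrix.mul_assoc, symJ_mul_symJ]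
      simp [Matrix.neg_mulVec]
    rw [hc]
    have : G i ⬝ᵥ -(A.mulVec v) = -((G.mulVec (A.mulVec v)) i) := by
      simp [Matrix.mulVec, dotProduct]
    rw [this, Matrix.mulVec_mulVec, hGA]
    simp
  refine ⟨hrankG, goal2, ?_⟩
  -- the Poisson matrix
  set M : Matrix (Fin l) (Fin l) ℝ :=
    Matrix.of (fun i j : Fin l => poisson (fun z => F z i) (fun z => F z j) y) with hMdef
  have hM : M = G * (symJ n * Gᵀ) := by
    ext i j
    rw [hMdef, Matrix.of_apply]
    unfold poisson
    rw [hgradF i, hgradF j]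
    simp [Matrix.mul_apply, Matrix.mulVec, dotProduct, Matrix.transpose_apply, Finset.mul_sum]
  set f : (Fin l → ℝ) →ₗ[ℝ] ((Fin n ⊕ Fin n) → ℝ) := (symJ n * Gᵀ).mulVecLin with hfdef
  have hMker : LinearMap.ker M.mulVecLin = Submodule.comap f (LinearMap.ker G.mulVecLin) := by
    rw [hM, Matrix.mulVecLin_mul, LinearMap.ker_comp]
  -- ker G = range A
  have hfinrankE : Module.finrank ℝ ((Fin n ⊕ Fin n) → ℝ) = 2 * n := by
    rw [Module.finrank_fintype_fun_eq_card, Fintype.card_sum, Fintype.card_fin, two_mul]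
  have hfinrankL : Module.finrank ℝ (Fin l → ℝ) = l := Module.finrank_fin_fun ℝ
  have hkerG : LinearMap.ker G.mulVecLin = LinearMap.range A.mulVecLin := by
    refine (Submodule.eq_of_le_of_finrank_eq ?_ ?_).symm
    · rintro _ ⟨v, rfl⟩
      simp only [LinearMap.mem_ker, Matrix.mulVecLin_apply, hA, hG, hΨΦ]
    · have h1 := LinearMap.finrank_range_add_finrank_ker G.mulVecLin
      rw [hfinrankE] at h1
      have h2 : Module.finrank ℝ (LinearMap.range G.mulVecLin) = l := by
        rw [hrangeG, finrank_top, hfinrankL]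
      have h3 : Module.finrank ℝ (LinearMap.range A.mulVecLin) = r := by
        rw [LinearMap.finrank_range_of_inj hAinj, Module.finrank_fin_fun]
      omega
  -- injectivity of J
  have hJinj : ∀ u u' : (Fin n ⊕ Fin n) → ℝ,
      (symJ n).mulVec u = (symJ n).mulVec u' → u = u' := by
    intro u u' h
    have := congrArg ((symJ n).mulVec) h
    rwa [Matrix.mulVec_mulVec, Matrix.mulVec_mulVec, symJ_mul_symJ, Matrix.neg_mulVec,
      Matrix.one_mulVec, Matrix.neg_mulVec, Matrix.one_mulVec, neg_inj] at this
  -- injectivity of Gᵀ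
  have hGTrank : (Gᵀ).rank = l := by rw [Matrix.rank_transpose, hrankG]
  have hGTinj : Function.Injective (Gᵀ).mulVecLin := by
    rw [← LinearMap.ker_eq_bot]
    have h1 := LinearMap.finrank_range_add_finrank_ker (Gᵀ).mulVecLin
    rw [hfinrankL] at h1
    have h2 : Module.finrank ℝ (LinearMap.range (Gᵀ).mulVecLin) = l := by
      show (Gᵀ).rank = l
      exact hGTrank
    have h3 : Module.finrank ℝ (LinearMap.ker (Gᵀ).mulVecLin) = 0 := by omega
    exact Submodule.finrank_eq_zero.mp h3
  have hfinj : Function.Injective f := by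
    intro u u' h
    have h' : (symJ n * Gᵀ) *ᵥ u = (symJ n * Gᵀ) *ᵥ u' := h
    rw [← Matrix.mulVec_mulVec, ← Matrix.mulVec_mulVec] at h'
    exact hGTinj (show (Gᵀ).mulVecLin u = (Gᵀ).mulVecLin u' from hJinj _ _ h')
  -- range Gᵀ = ker Aᵀ
  have hrangeGT : LinearMap.range (Gᵀ).mulVecLin = LinearMap.ker (Aᵀ).mulVecLin := by
    refine Submodule.eq_of_le_of_finrank_eq ?_ ?_
    · rintro _ ⟨u, rfl⟩
      simp only [LinearMap.mem_ker, Matrix.mulVecLin_apply, Matrix.mulVec_mulVec]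
      have : Aᵀ * Gᵀ = 0 := by
        rw [← Matrix.transpose_mul, hGA, Matrix.transpose_zero]
      rw [this, Matrix.zero_mulVec]
    · have h1 := LinearMap.finrank_range_add_finrank_ker (Aᵀ).mulVecLin
      rw [hfinrankE] at h1
      have h2 : Module.finrank ℝ (LinearMap.range (Aᵀ).mulVecLin) = r := by
        show (Aᵀ).rank = r
        rw [Matrix.rank_transpose, hrankA]
      have h4 : Module.finrank ℝ (LinearMap.range (Gᵀ).mulVecLin) = l := by
        show (Gᵀ).rank = l
        exact hGTrank
      omega
  -- range A ≤ range f
  have hrangef : LinearMap.range A.mulVecLin ≤ LinearMap.range f := by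
    rintro _ ⟨v, rfl⟩
    have hmem : -((symJ n).mulVec (A.mulVec v)) ∈ LinearMap.ker (Aᵀ).mulVecLin := by
      simp only [LinearMap.mem_ker, Matrix.mulVecLin_apply, Matrix.mulVec_neg,
        Matrix.mulVec_mulVec]
      rw [← Matrix.mul_assoc, hsol2', Matrix.zero_mulVec, neg_zero]
    rw [← hrangeGT] at hmem
    obtain ⟨u, hu⟩ := hmem
    refine ⟨u, ?_⟩
    simp only [hfdef, Matrix.mulVecLin_apply] at hu ⊢
    rw [← Matrix.mulVec_mulVec, hu, Matrix.mulVec_neg, Matrix.mulVec_mulVec,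
      Matrix.mulVec_mulVec, symJ_mul_symJ]
    simp [Matrix.neg_mulVec]
  -- final computation
  have hcomapfin :
      Module.finrank ℝ (Submodule.comap f (LinearMap.range A.mulVecLin)) = r := by
    have heq :=
      (Submodule.equivMapOfInjective f hfinj
        (Submodule.comap f (LinearMap.range A.mulVecLin))).finrank_eq
    rw [Submodule.map_comap_eq_self hrangef] at heq
    rw [heq, LinearMap.finrank_range_of_inj hAinj, Module.finrank_fin_fun]
  rw [hMker, hkerG, hcomapfin]
  omega
end

section
/- Let H : ℝ^{2n} → ℝ be smooth, U ⊆ ℝ^r open and connected, Λ ⊆ ℝ^l open, and Σ : U × Λ → ℝ^{2n} smooth such that for each λ ∈ Λ the map σ_λ := Σ(·,λ) satisfies ∇H(σ_λ(x)) ∈ Im(J·Dσ_λ(x)) and Dσ_λ(x)ᵀ·J·Dσ_λ(x) = 0 for all x ∈ U. Then there exists a smooth function h : Λ → ℝ such that H(Σ(x,λ)) = h(λ) for all (x,λ) ∈ U × Λ. -/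
open Matrix

/-- A continuous linear map on a finite pi type is the sum of its values on the basis. -/
lemma clm_apply_eq_sum {ι : Type*} [Fintype ι] [DecidableEq ι] {F : Type*}
    [NormedAddCommGroup F] [NormedSpace ℝ F]
    (f : (ι → ℝ) →L[ℝ] F) (w : ι → ℝ) : f w = ∑ i, w i • f (Pi.single i 1) := by
  conv_lhs => rw [← Finset.univ_sum_single w, map_sum]
  refine Finset.sum_congr rfl fun i _ => ?_
  have : (Pi.single i (w i) : ι → ℝ) = w i • (Pi.single i 1 : ι → ℝ) := by
    ext j; by_cases h : j = i <;> simp [Pi.single_apply, h]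
  rw [this]; exact f.map_smul _ _

/-- A function with vanishing derivative on an open preconnected set is constant there. -/
lemma const_of_fderiv_zero_on {E : Type*} [NormedAddCommGroup E] [NormedSpace ℝ E]
    (g : E → ℝ) (U : Set E) (hU : IsOpen U) (hUconn : IsPreconnected U)
    (hdiff : ∀ y ∈ U, DifferentiableAt ℝ g y) (hd : ∀ y ∈ U, fderiv ℝ g y = 0)
    {a b : E} (ha : a ∈ U) (hb : b ∈ U) : g a = g b := by
  have key : ∀ y ∈ U, ∃ ε > 0, Metric.ball y ε ⊆ U ∧ ∀ z ∈ Metric.ball y ε, g z = g y := by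
    intro y hy
    obtain ⟨ε, hε, hball⟩ := Metric.isOpen_iff.1 hU y hy
    refine ⟨ε, hε, hball, fun z hz => ?_⟩
    exact (convex_ball y ε).is_const_of_fderivWithin_eq_zero
      (fun w hw => (hdiff w (hball hw)).differentiableWithinAt)
      (fun w hw => by
        rw [fderivWithin_of_isOpen Metric.isOpen_ball hw]; exact hd w (hball hw))
      hz (Metric.mem_ball_self hε)
  set V : Set E := {y | y ∈ U ∧ g y = g a} with hV
  set W : Set E := {y | y ∈ U ∧ g y ≠ g a} with hW
  have hVopen : IsOpen V := by
    rw [Metric.isOpen_iff]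
    rintro y ⟨hyU, hyv⟩
    obtain ⟨ε, hε, hball, hconst⟩ := key y hyU
    exact ⟨ε, hε, fun z hz => ⟨hball hz, (hconst z hz).trans hyv⟩⟩
  have hWopen : IsOpen W := by
    rw [Metric.isOpen_iff]
    rintro y ⟨hyU, hyv⟩
    obtain ⟨ε, hε, hball, hconst⟩ := key y hyU
    exact ⟨ε, hε, fun z hz => ⟨hball hz, (hconst z hz).symm ▸ hyv⟩⟩
  by_contra hne
  have hcover : U ⊆ V ∪ W := fun y hy => by
    by_cases h : g y = g a
    · exact Or.inl ⟨hy, h⟩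
    · exact Or.inr ⟨hy, h⟩
  obtain ⟨z, _, hzV, hzW⟩ := hUconn V W hVopen hWopen hcover
    ⟨a, ha, ha, rfl⟩ ⟨b, hb, hb, fun h => hne h.symm⟩
  exact hzW.2 hzV.2

/-- For a family of generalized solutions `σ_λ = Σ(·,λ)` of the Hamilton–Jacobi equation
over a connected open `U`, the value `H(Σ(x,λ))` does not depend on `x`: there is a smooth
`h : Λ → ℝ` with `H ∘ Σ = h ∘ 𝔭`. -/
theorem exists_h_of_solutions
    (n r l : ℕ)
    (H : ((Fin n ⊕ Fin n) → ℝ) → ℝ) (hH : ContDiff ℝ (⊤ : ℕ∞) H)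
    (U : Set (Fin r → ℝ)) (Λ : Set (Fin l → ℝ))
    (hU : IsOpen U) (hUconn : IsPreconnected U) (hΛ : IsOpen Λ)
    (S : (Fin r → ℝ) × (Fin l → ℝ) → (Fin n ⊕ Fin n) → ℝ)
    (hS : ContDiffOn ℝ (⊤ : ℕ∞) S (U ×ˢ Λ))
    (hsol1 : ∀ x ∈ U, ∀ lam ∈ Λ, mgrad H (S (x, lam)) ∈
      LinearMap.range (Matrix.mulVecLin (symJ n * mjac (fun y => S (y, lam)) x)))
    (hsol2 : ∀ x ∈ U, ∀ lam ∈ Λ,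
      (mjac (fun y => S (y, lam)) x)ᵀ * symJ n * mjac (fun y => S (y, lam)) x = 0) :
    ∃ h : (Fin l → ℝ) → ℝ, ContDiffOn ℝ (⊤ : ℕ∞) h Λ ∧
      ∀ x ∈ U, ∀ lam ∈ Λ, H (S (x, lam)) = h lam := by
  rcases U.eq_empty_or_nonempty with hUe | ⟨x₀, hx₀⟩
  · exact ⟨fun _ => 0, contDiffOn_const, fun x hx => by simp [hUe] at hx⟩
  -- h is the value at the base point x₀
  refine ⟨fun lam => H (S (x₀, lam)), ?_, ?_⟩
  · exact hH.comp_contDiffOn <| hS.comp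
      ((contDiff_const.prodMk contDiff_id).contDiffOn)
      (fun lam hlam => Set.mk_mem_prod hx₀ hlam)
  intro x hx lam hlam
  -- the slice σ := S(·, lam) is smooth on U
  have hσ : ContDiffOn ℝ (⊤ : ℕ∞) (fun y => S (y, lam)) U :=
    hS.comp ((contDiff_id.prodMk contDiff_const).contDiffOn)
      (fun y hy => Set.mk_mem_prod hy hlam)
  have hσdiff : ∀ y ∈ U, DifferentiableAt ℝ (fun y => S (y, lam)) y := fun y hy =>
    (hσ.contDiffAt (hU.mem_nhds hy)).differentiableAt (by simp)
  have hgdiff : ∀ y ∈ U, DifferentiableAt ℝ (fun y => H (S (y, lam))) y := fun y hy =>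
    ((hH.differentiable (by simp)) _).comp y (hσdiff y hy)
  -- the derivative of y ↦ H (S (y, lam)) vanishes on U
  have hzero : ∀ y ∈ U, fderiv ℝ (fun y => H (S (y, lam))) y = 0 := by
    intro y hy
    set σ : (Fin r → ℝ) → (Fin n ⊕ Fin n) → ℝ := fun y => S (y, lam) with hσdef
    set A := mjac σ y with hA
    set p := σ y with hp
    have hcomp : fderiv ℝ (fun y => H (σ y)) y =
        (fderiv ℝ H p).comp (fderiv ℝ σ y) :=
      fderiv_comp y ((hH.differentiable (by simp)) p) (hσdiff y hy)
    obtain ⟨v, hv⟩ := hsol1 y hy lam hlam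
    have hvec : (symJ n * A) *ᵥ v = mgrad H p := by
      simpa [Matrix.mulVecLin_apply] using hv
    have hbasis : ∀ j, fderiv ℝ (fun y => H (σ y)) y (Pi.single j 1) = 0 := by
      intro j
      rw [hcomp]
      have hw : fderiv ℝ σ y (Pi.single j 1) = A *ᵥ Pi.single j 1 := by
        ext i
        simp [hA, mjac, Matrix.mulVec_single]
      calc fderiv ℝ H p (fderiv ℝ σ y (Pi.single j 1))
          = ∑ i, (A *ᵥ Pi.single j 1) i • fderiv ℝ H p (Pi.single i 1) := by
            rw [hw]; exact clm_apply_eq_sum _ _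
        _ = (A *ᵥ Pi.single j 1) ⬝ᵥ mgrad H p := by
            simp [dotProduct, mgrad, hp, smul_eq_mul]
        _ = (A *ᵥ Pi.single j 1) ⬝ᵥ ((symJ n * A) *ᵥ v) := by rw [hvec]
        _ = (Pi.single j 1 : Fin r → ℝ) ᵥ* (Aᵀ * symJ n * A) ⬝ᵥ v := by
            rw [Matrix.dotProduct_mulVec, Matrix.vecMul_mulVec, Matrix.mul_assoc]
        _ = 0 := by
            rw [show Aᵀ * symJ n * A = 0 from hsol2 y hy lam hlam]
            simp
    refine ContinuousLinearMap.ext fun u => ?_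
    rw [clm_apply_eq_sum]
    simp only [ContinuousLinearMap.zero_apply, smul_eq_mul]
    exact Finset.sum_eq_zero fun j _ => by rw [hbasis j, mul_zero]
  -- conclude by constancy on the preconnected set U
  exact const_of_fderiv_zero_on (fun y => H (S (y, lam))) U hU hUconn hgdiff hzero hx hx₀
end

section
/- Let H : ℝ^{2n} → ℝ be smooth and F_1,...,F_l : ℝ^{2n} → ℝ smooth functions satisfying the non-commutative integrability conditions: (1) the Jacobian of F = (F_1,...,F_l) has rank l everywhere; (2) {F_i,H} = 0 for all i; (3) for every x the kernel of the l×l matrix ({F_i,F_j}(x)) has dimension r := 2n−l; (4) there exist smooth P_{ij} : Im F → ℝ with {F_i,F_j} = P_{ij} ∘ F. Then for each λ_0 ∈ Im F there exist smooth vector fields X_1,...,X_r : ℝ^{2n} → ℝ^{2n}, linearly independent at every point of ℝ^{2n}, such that for all x ∈ F^{-1}(λ_0) and all i,j: DF(x)·X_i(x) = 0 (tangency to the level set F^{-1}(λ_0)), [X_i,X_j](x) = 0, and [X_i,X_H](x) = 0, where X_H(x) = J·∇H(x) is the Hamiltonian vector field of H. -/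
open Matrix

/-- Lie bracket of vector fields on `ℝ^m` (column-vector convention):
`[X,Y](x) = DY(x)·X(x) − DX(x)·Y(x)`. -/
noncomputable def mlie {ι : Type*} [Fintype ι] [DecidableEq ι]
    (X Y : (ι → ℝ) → (ι → ℝ)) (x : ι → ℝ) : ι → ℝ :=
  (mjac Y x).mulVec (X x) - (mjac X x).mulVec (Y x)

lemma mgrad_contDiff {ι : Type*} [Fintype ι] [DecidableEq ι] {f : (ι → ℝ) → ℝ}
    (hf : ContDiff ℝ (⊤ : ℕ∞) f) (i : ι) : ContDiff ℝ (⊤ : ℕ∞) fun x => mgrad f x i :=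
  (hf.fderiv_right (by simp)).clm_apply contDiff_const


lemma symJ_transpose (n : ℕ) : (symJ n)ᵀ = -symJ n := by
  ext (i|i) (j|j) <;> simp [symJ, Matrix.fromBlocks, Matrix.one_apply, eq_comm]

lemma symJ_mul_inv (n : ℕ) : symJ n * Matrix.fromBlocks 0 (-1) 1 0 = 1 := by
  simp [symJ, fromBlocks_multiply, ← fromBlocks_one]

lemma symJ_mulVec_injective (n : ℕ) :
    Function.Injective (fun v => (symJ n).mulVec v) := by
  intro u v h
  have h2 := congrArg (fun w => (Matrix.fromBlocks 0 (-1) 1 0 : Matrix (Fin n ⊕ Fin n) (Fin n ⊕ Fin n) ℝ).mulVec w) h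
  simpa [Matrix.mulVec_mulVec, mul_eq_one_comm.mp (symJ_mul_inv n)] using h2


noncomputable def mhess {ι : Type*} [Fintype ι] [DecidableEq ι]
    (f : (ι → ℝ) → ℝ) (x : ι → ℝ) : Matrix ι ι ℝ :=
  Matrix.of fun i j => fderiv ℝ (fun y => mgrad f y i) x (Pi.single j 1)

section hess
variable {ι : Type*} [Fintype ι] [DecidableEq ι] {f : (ι → ℝ) → ℝ}

lemma hasFDerivAt_mgrad (hf : ContDiff ℝ (⊤ : ℕ∞) f) (x : ι → ℝ) (s : ι) :
    HasFDerivAt (fun y => mgrad f y s) (fderiv ℝ (fun y => mgrad f y s) x) x :=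
  (((mgrad_contDiff hf s).differentiable (by simp : ((⊤ : ℕ∞) : WithTop ℕ∞) ≠ 0)) x).hasFDerivAt

lemma mhess_eq_snd (hf : ContDiff ℝ (⊤ : ℕ∞) f) (x : ι → ℝ) (i j : ι) :
    mhess f x i j = fderiv ℝ (fderiv ℝ f) x (Pi.single j 1) (Pi.single i 1) := by
  have hdiff : DifferentiableAt ℝ (fderiv ℝ f) x :=
    ((hf.fderiv_right (by simp)).differentiable (by simp : ((⊤ : ℕ∞) : WithTop ℕ∞) ≠ 0)) x
  have h1 : HasFDerivAt (fun y => (fderiv ℝ f y) (Pi.single i 1))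
      ((fderiv ℝ (fderiv ℝ f) x).flip (Pi.single i 1)) x := by
    simpa using hdiff.hasFDerivAt.clm_apply (hasFDerivAt_const (Pi.single i 1) x)
  have : fderiv ℝ (fun y => mgrad f y i) x = (fderiv ℝ (fderiv ℝ f) x).flip (Pi.single i 1) := by
    simpa [mgrad] using h1.fderiv
  simp [mhess, this]

lemma mhess_symm (hf : ContDiff ℝ (⊤ : ℕ∞) f) (x : ι → ℝ) : (mhess f x)ᵀ = mhess f x := by
  ext i j
  rw [Matrix.transpose_apply, mhess_eq_snd hf, mhess_eq_snd hf]
  exact second_derivative_symmetric (fun y => ((hf.differentiable (by simp : ((⊤ : ℕ∞) : WithTop ℕ∞) ≠ 0)) y).hasFDerivAt)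
    (((hf.fderiv_right (by simp)).differentiable (by simp : ((⊤ : ℕ∞) : WithTop ℕ∞) ≠ 0)) x).hasFDerivAt _ _
end hess


section ham
variable {n : ℕ} {f g : ((Fin n ⊕ Fin n) → ℝ) → ℝ}

lemma poisson_contDiff (hf : ContDiff ℝ (⊤ : ℕ∞) f) (hg : ContDiff ℝ (⊤ : ℕ∞) g) :
    ContDiff ℝ (⊤ : ℕ∞) (poisson f g) := by
  have : (poisson f g) = fun x => ∑ s, mgrad f x s * ∑ t, symJ n s t * mgrad g x t := rfl
  rw [this]
  exact ContDiff.sum fun s _ => (mgrad_contDiff hf s).mul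
    (ContDiff.sum fun t _ => contDiff_const.mul (mgrad_contDiff hg t))

lemma mjac_hamvec (hg : ContDiff ℝ (⊤ : ℕ∞) g) (x : (Fin n ⊕ Fin n) → ℝ) :
    mjac (fun y => (symJ n).mulVec (mgrad g y)) x = symJ n * mhess g x := by
  have h : HasFDerivAt (fun y => (symJ n).mulVec (mgrad g y))
      (ContinuousLinearMap.pi fun c => ∑ t, symJ n c t • fderiv ℝ (fun y => mgrad g y t) x) x := by
    apply hasFDerivAt_pi.2
    intro c
    show HasFDerivAt (fun y => ∑ t, symJ n c t * mgrad g y t)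
      (∑ t, symJ n c t • fderiv ℝ (fun y => mgrad g y t) x) x
    exact HasFDerivAt.fun_sum fun t _ => (hasFDerivAt_mgrad hg x t).const_mul _
  ext c j
  rw [Matrix.mul_apply]
  show fderiv ℝ (fun y => (symJ n).mulVec (mgrad g y)) x (Pi.single j 1) c = _
  rw [h.fderiv]
  simp [mhess, Matrix.of_apply]

lemma mgrad_poisson (hf : ContDiff ℝ (⊤ : ℕ∞) f) (hg : ContDiff ℝ (⊤ : ℕ∞) g) (x : (Fin n ⊕ Fin n) → ℝ) :
    mgrad (poisson f g) x
      = (mhess f x)ᵀ.mulVec ((symJ n).mulVec (mgrad g x))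
        + (mhess g x)ᵀ.mulVec ((symJ n)ᵀ.mulVec (mgrad f x)) := by
  have h : HasFDerivAt (poisson f g)
      (∑ s, ((∑ t, symJ n s t * mgrad g x t) • fderiv ℝ (fun y => mgrad f y s) x
        + mgrad f x s • ∑ t, symJ n s t • fderiv ℝ (fun y => mgrad g y t) x)) x := by
    rw [show (poisson f g) = fun y => ∑ s, mgrad f y s * ∑ t, symJ n s t * mgrad g y t from rfl]
    apply HasFDerivAt.fun_sum
    intro s _
    have h1 := (hasFDerivAt_mgrad hf x s).fun_mul
      (HasFDerivAt.fun_sum fun t (_ : t ∈ Finset.univ) => (hasFDerivAt_mgrad hg x t).const_mul (symJ n s t))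
    convert h1 using 1
    · rfl
    abel
  funext j
  show fderiv ℝ (poisson f g) x (Pi.single j 1) = _
  rw [h.fderiv]
  simp only [ContinuousLinearMap.sum_apply, ContinuousLinearMap.add_apply,
    ContinuousLinearMap.smul_apply, smul_eq_mul]
  have hm : ∀ (φ : ((Fin n ⊕ Fin n) → ℝ) → ℝ) s, fderiv ℝ (fun y => mgrad φ y s) x (Pi.single j 1) = mhess φ x s j :=
    fun φ s => rfl
  simp only [hm]
  rw [Pi.add_apply]
  have e1 : (mhess f x)ᵀ.mulVec ((symJ n).mulVec (mgrad g x)) j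
      = ∑ s, (∑ t, symJ n s t * mgrad g x t) * mhess f x s j := by
    simp [Matrix.mulVec, dotProduct, Matrix.transpose_apply, mul_comm]
  have e2 : (mhess g x)ᵀ.mulVec ((symJ n)ᵀ.mulVec (mgrad f x)) j
      = ∑ s, mgrad f x s * ∑ t, symJ n s t * mhess g x t j := by
    simp only [Matrix.mulVec, dotProduct, Matrix.transpose_apply, Finset.mul_sum]
    rw [Finset.sum_comm]
    congr 1; funext s; congr 1; funext t; ring
  rw [e1, e2, ← Finset.sum_add_distrib]
end ham

lemma mlie_ham {n : ℕ} {f g : ((Fin n ⊕ Fin n) → ℝ) → ℝ}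
    (hf : ContDiff ℝ (⊤ : ℕ∞) f) (hg : ContDiff ℝ (⊤ : ℕ∞) g) (x : (Fin n ⊕ Fin n) → ℝ) :
    mlie (fun y => (symJ n).mulVec (mgrad f y)) (fun y => (symJ n).mulVec (mgrad g y)) x
      = -((symJ n).mulVec (mgrad (poisson f g) x)) := by
  unfold mlie
  rw [mjac_hamvec hf, mjac_hamvec hg, mgrad_poisson hf hg, mhess_symm hf, mhess_symm hg,
    symJ_transpose]
  simp only [Matrix.mulVec_add, Matrix.mulVec_mulVec, Matrix.neg_mulVec, Matrix.mulVec_neg,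
    Matrix.mul_assoc, neg_add, neg_neg]
  abel

open Topology Filter Asymptotics in
lemma key_deriv {l r : ℕ} (Q : ℝ → Matrix (Fin l) (Fin l) ℝ)
    (hQ : ∀ i j, DifferentiableAt ℝ (fun t => Q t i j) 0)
    (hanti : ∀ t, (Q t)ᵀ = -(Q t))
    (hker : ∀ t, Module.finrank ℝ (LinearMap.ker (Q t).mulVecLin) = r)
    (a b : Fin l → ℝ) (ha : (Q 0).mulVec a = 0) (hb : (Q 0).mulVec b = 0) :
    HasDerivAt (fun t => b ⬝ᵥ ((Q t).mulVec a)) 0 0 := by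
  classical
  set K := LinearMap.ker (Q 0).mulVecLin with hK
  set W := LinearMap.range (Q 0).mulVecLin with hW
  have hskew : ∀ t (u v : Fin l → ℝ), u ⬝ᵥ (Q t).mulVec v = -((Q t).mulVec u ⬝ᵥ v) := by
    intro t u v
    rw [Matrix.dotProduct_mulVec]
    conv_lhs => rw [← Matrix.transpose_transpose (Q t), Matrix.vecMul_transpose]
    rw [hanti t, Matrix.neg_mulVec, neg_dotProduct]
  have hmemK : ∀ (t : ℝ) (v : Fin l → ℝ), v ∈ LinearMap.ker (Q t).mulVecLin ↔ (Q t).mulVec v = 0 := by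
    intro t v
    rw [LinearMap.mem_ker, Matrix.mulVecLin_apply]
  have hdisj : Disjoint W K := by
    rw [Submodule.disjoint_def]
    rintro v ⟨w, rfl⟩ hvK
    have hvK' : (Q 0).mulVec ((Q 0).mulVecLin w) = 0 := (hmemK 0 _).1 hvK
    have h1 : ((Q 0).mulVecLin w) ⬝ᵥ ((Q 0).mulVecLin w) = 0 := by
      rw [show (Q 0).mulVecLin w = (Q 0).mulVec w from rfl] at hvK' ⊢
      rw [hskew 0, hvK']
      simp
    exact dotProduct_self_eq_zero.mp h1
  have hfintop : Module.finrank ℝ (Fin l → ℝ) = l := by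
    simp [Module.finrank_fintype_fun_eq_card]
  have hrank : Module.finrank ℝ W + Module.finrank ℝ K = l := by
    have := LinearMap.finrank_range_add_finrank_ker (Q 0).mulVecLin
    rw [hfintop] at this
    exact this
  have hcompl : IsCompl W K := by
    refine ⟨hdisj, codisjoint_iff.2 ?_⟩
    apply Submodule.eq_top_of_finrank_eq
    have h2 := Submodule.finrank_sup_add_finrank_inf_eq W K
    rw [hdisj.eq_bot] at h2
    simp only [finrank_bot, add_zero] at h2
    rw [hfintop, h2, hrank]
  set πl : (Fin l → ℝ) →ₗ[ℝ] (Fin l → ℝ) :=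
    K.subtype.comp (K.projectionOnto W hcompl.symm) with hπl
  have hπmem : ∀ v, πl v ∈ K := fun v => Submodule.coe_mem _
  have hπK : ∀ v ∈ K, πl v = v := by
    intro v hv
    have := Submodule.projectionOnto_apply_left hcompl.symm ⟨v, hv⟩
    simp only [hπl, LinearMap.comp_apply]
    rw [show v = ((⟨v, hv⟩ : K) : Fin l → ℝ) from rfl, this]
    rfl
  have hπW : ∀ v ∈ W, πl v = 0 := by
    intro v hv
    simp only [hπl, LinearMap.comp_apply]
    rw [Submodule.projectionOnto_apply_of_mem_right hcompl.symm hv]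
    simp
  set Pk := LinearMap.toMatrix' πl with hPkdef
  have hPk : ∀ v, Pk.mulVec v = πl v := by
    intro v
    rw [← Matrix.toLin'_apply, hPkdef, Matrix.toLin'_toMatrix']
  set M : ℝ → Matrix (Fin l) (Fin l) ℝ := fun t => Q t + Pk with hMdef
  have haK : a ∈ K := (hmemK 0 a).2 ha
  have hM0 : (M 0).det ≠ 0 := by
    intro hdet
    obtain ⟨v, hv0, hv⟩ := (Matrix.exists_mulVec_eq_zero_iff).2 hdet
    have h1 : (Q 0).mulVec v + πl v = 0 := by
      rw [← hPk, ← Matrix.add_mulVec]; exact hv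
    have hQvW : (Q 0).mulVec v ∈ W := ⟨v, rfl⟩
    have hQvK : (Q 0).mulVec v ∈ K := by
      rw [show (Q 0).mulVec v = -πl v by linear_combination (norm := module) h1]
      exact K.neg_mem (hπmem v)
    have hQv0 : (Q 0).mulVec v = 0 := by
      have := hdisj.eq_bot ▸ Submodule.mem_inf.2 ⟨hQvW, hQvK⟩
      simpa using this
    have hvK : v ∈ K := (hmemK 0 v).2 hQv0
    have hπv0 : πl v = 0 := by rw [hQv0] at h1; simpa using h1
    rw [hπK v hvK] at hπv0
    exact hv0 hπv0
  have hQu : ∀ t, (M t).det ≠ 0 → (Q t).mulVec ((M t)⁻¹.mulVec a) = 0 := by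
    intro t hdet
    have hinv : (M t)⁻¹ * M t = 1 := Matrix.nonsing_inv_mul _ (isUnit_iff_ne_zero.2 hdet)
    have hMinj : Function.Injective ((M t).mulVec) := by
      intro u v huv
      have := congrArg ((M t)⁻¹.mulVec) huv
      simpa [Matrix.mulVec_mulVec, hinv] using this
    set Kt := LinearMap.ker (Q t).mulVecLin with hKt
    set ψ : Kt →ₗ[ℝ] K :=
      LinearMap.codRestrict K (πl.comp Kt.subtype) (fun v => hπmem _) with hψ
    have hψinj : Function.Injective ψ := by
      intro u v huv
      have h2 : πl (↑u - ↑v) = 0 := by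
        have : πl ↑u = πl ↑v := congrArg Subtype.val huv
        rw [map_sub, this, sub_self]
      have hu : (Q t).mulVec ↑u = 0 := (hmemK t _).1 u.2
      have hvv : (Q t).mulVec ↑v = 0 := (hmemK t _).1 v.2
      have h3 : (M t).mulVec (↑u - ↑v) = 0 := by
        rw [show M t = Q t + Pk from rfl, Matrix.add_mulVec, hPk, h2,
          Matrix.mulVec_sub, hu, hvv]
        simp
      have := hMinj (h3.trans (Matrix.mulVec_zero (M t)).symm)
      exact Subtype.ext (sub_eq_zero.mp this)
    have hψsurj : Function.Surjective ψ :=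
      (LinearMap.injective_iff_surjective_of_finrank_eq_finrank
        (by rw [hker t, hker 0])).1 hψinj
    obtain ⟨v, hv⟩ := hψsurj ⟨a, haK⟩
    have hπv : πl ↑v = a := congrArg Subtype.val hv
    have hQtv : (Q t).mulVec ↑v = 0 := (hmemK t _).1 v.2
    have hMv : (M t).mulVec ↑v = a := by
      rw [show M t = Q t + Pk from rfl, Matrix.add_mulVec, hPk, hQtv, hπv]
      simp
    have huv : (M t)⁻¹.mulVec a = ↑v := by
      rw [← hMv, Matrix.mulVec_mulVec, hinv, Matrix.one_mulVec]
    rw [huv]; exact hQtv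
  -- eventual invertibility and continuity of the inverse
  have hMcont : ContinuousAt (fun t => M t) 0 := by
    apply continuousAt_pi.2; intro i; apply continuousAt_pi.2; intro j
    show ContinuousAt (fun t => Q t i j + Pk i j) 0
    exact (hQ i j).continuousAt.add continuousAt_const
  have hdet_cont : ContinuousAt (fun t => (M t).det) 0 :=
    (continuous_id.matrix_det.continuousAt).comp hMcont
  have hev : ∀ᶠ t in 𝓝 (0:ℝ), (M t).det ≠ 0 := hdet_cont.eventually_ne hM0
  have hinv_cont : ContinuousAt (fun t => (M t)⁻¹) 0 := by
    apply ContinuousAt.comp ?_ hMcont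
    apply continuousAt_matrix_inv
    rw [show (Ring.inverse : ℝ → ℝ) = Inv.inv from Ring.inverse_eq_inv']
    exact continuousAt_inv₀ hM0
  have hNij : ∀ i j, ContinuousAt (fun t => (M t)⁻¹ i j) 0 := by
    intro i j
    have hc : Continuous (fun A : Matrix (Fin l) (Fin l) ℝ => A i j) :=
      (continuous_apply j).comp (continuous_apply i)
    exact hc.continuousAt.comp hinv_cont
  have hOa : ∀ jj, (fun t => ((Q t).mulVec a) jj) =O[𝓝 (0:ℝ)] (fun t => t) := by
    intro jj
    have hdiff : DifferentiableAt ℝ (fun t => ((Q t).mulVec a) jj) 0 := by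
      show DifferentiableAt ℝ (fun t => ∑ k, Q t jj k * a k) 0
      exact DifferentiableAt.fun_sum fun k _ => (hQ jj k).mul_const _
    have h1 := hdiff.hasFDerivAt.isBigO_sub
    simpa [show ((Q 0).mulVec a) jj = 0 from by rw [ha]; rfl, sub_zero] using h1
  have hOb : ∀ jj, (fun t => ((Q t).mulVec b) jj) =O[𝓝 (0:ℝ)] (fun t => t) := by
    intro jj
    have hdiff : DifferentiableAt ℝ (fun t => ((Q t).mulVec b) jj) 0 := by
      show DifferentiableAt ℝ (fun t => ∑ k, Q t jj k * b k) 0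
      exact DifferentiableAt.fun_sum fun k _ => (hQ jj k).mul_const _
    have h1 := hdiff.hasFDerivAt.isBigO_sub
    simpa [show ((Q 0).mulVec b) jj = 0 from by rw [hb]; rfl, sub_zero] using h1
  have hform : (fun t => b ⬝ᵥ ((Q t).mulVec a)) =ᶠ[𝓝 (0:ℝ)]
      (fun t => -∑ i, ∑ j, ((Q t).mulVec b) i * ((M t)⁻¹ i j * ((Q t).mulVec a) j)) := by
    filter_upwards [hev] with t hdet
    have hinv : (M t)⁻¹ * M t = 1 := Matrix.nonsing_inv_mul _ (isUnit_iff_ne_zero.2 hdet)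
    have hsplit : (Q t).mulVec a = (Q t).mulVec (a - (M t)⁻¹.mulVec a) := by
      rw [Matrix.mulVec_sub, hQu t hdet, sub_zero]
    have h4 : (M t).mulVec a - a = (Q t).mulVec a := by
      rw [show M t = Q t + Pk from rfl, Matrix.add_mulVec, hPk, hπK a haK,
        add_sub_cancel_right]
    have hrepr : a - (M t)⁻¹.mulVec a = (M t)⁻¹.mulVec ((Q t).mulVec a) := by
      calc a - (M t)⁻¹.mulVec a
          = (M t)⁻¹.mulVec ((M t).mulVec a) - (M t)⁻¹.mulVec a := by
            rw [Matrix.mulVec_mulVec, hinv, Matrix.one_mulVec]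
        _ = (M t)⁻¹.mulVec ((M t).mulVec a - a) := by rw [Matrix.mulVec_sub]
        _ = _ := by rw [h4]
    have hexp : ((Q t).mulVec b) ⬝ᵥ ((M t)⁻¹.mulVec ((Q t).mulVec a))
        = ∑ i, ∑ j, ((Q t).mulVec b) i * ((M t)⁻¹ i j * ((Q t).mulVec a) j) := by
      rw [show ((M t)⁻¹.mulVec ((Q t).mulVec a)) = fun i => ∑ j, (M t)⁻¹ i j * ((Q t).mulVec a) j from rfl]
      rw [show ∀ (u v : Fin l → ℝ), u ⬝ᵥ v = ∑ i, u i * v i from fun _ _ => rfl]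
      exact Finset.sum_congr rfl fun i _ => Finset.mul_sum _ _ _
    calc b ⬝ᵥ ((Q t).mulVec a) = b ⬝ᵥ ((Q t).mulVec (a - (M t)⁻¹.mulVec a)) := by
          rw [← hsplit]
      _ = -(((Q t).mulVec b) ⬝ᵥ (a - (M t)⁻¹.mulVec a)) := hskew t b _
      _ = -(((Q t).mulVec b) ⬝ᵥ ((M t)⁻¹.mulVec ((Q t).mulVec a))) := by rw [hrepr]
      _ = _ := by rw [hexp]
  have hbig : (fun t => b ⬝ᵥ ((Q t).mulVec a)) =O[𝓝 (0:ℝ)] (fun t => t * t) := by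
    apply IsBigO.congr' ?_ hform.symm (Filter.EventuallyEq.refl _ _)
    apply IsBigO.neg_left
    apply Asymptotics.IsBigO.fun_sum
    intro i _
    apply Asymptotics.IsBigO.fun_sum
    intro j _
    have h2 := (hOb i).mul (((hNij i j).isBigO_one ℝ).mul (hOa j))
    simpa using h2
  have hlittle : (fun t => b ⬝ᵥ ((Q t).mulVec a)) =o[𝓝 (0:ℝ)] (fun t => t) := by
    apply hbig.trans_isLittleO
    have h1 : (fun t : ℝ => t) =o[𝓝 (0:ℝ)] (fun _ => (1:ℝ)) :=
      (isLittleO_one_iff ℝ).2 tendsto_id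
    have h2 := h1.mul_isBigO (isBigO_refl (fun t : ℝ => t) (𝓝 (0:ℝ)))
    simpa using h2
  rw [hasDerivAt_iff_isLittleO]
  simpa [ha] using hlittle

section lin
variable {ι κ : Type*} [Fintype ι] [DecidableEq ι] [Fintype κ]

lemma mgrad_sum (f : κ → (ι → ℝ) → ℝ) (hf : ∀ k, ContDiff ℝ (⊤ : ℕ∞) (f k)) (c : κ → ℝ)
    (x : ι → ℝ) (j : ι) :
    mgrad (fun y => ∑ k, c k * f k y) x j = ∑ k, c k * mgrad (f k) x j := by
  have h : HasFDerivAt (fun y => ∑ k, c k * f k y) (∑ k, c k • fderiv ℝ (f k) x) x :=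
    HasFDerivAt.fun_sum fun k _ =>
      ((((hf k).differentiable (by simp : ((⊤ : ℕ∞) : WithTop ℕ∞) ≠ 0)) x).hasFDerivAt).const_mul (c k)
  show fderiv ℝ _ x (Pi.single j 1) = _
  rw [h.fderiv]
  simp [mgrad]

lemma contDiff_lincomb (f : κ → (ι → ℝ) → ℝ) (hf : ∀ k, ContDiff ℝ (⊤ : ℕ∞) (f k)) (c : κ → ℝ) :
    ContDiff ℝ (⊤ : ℕ∞) (fun y => ∑ k, c k * f k y) :=
  ContDiff.sum fun k _ => contDiff_const.mul (hf k)

lemma mjac_pi (F : κ → (ι → ℝ) → ℝ) (hF : ∀ k, ContDiff ℝ (⊤ : ℕ∞) (F k)) (x : ι → ℝ) :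
    mjac (fun y k => F k y) x = Matrix.of fun k j => mgrad (F k) x j := by
  ext k j
  show fderiv ℝ (fun y k => F k y) x (Pi.single j 1) k = _
  rw [fderiv_pi (fun k => ((hF k).differentiable (by simp : ((⊤ : ℕ∞) : WithTop ℕ∞) ≠ 0)) x)]
  rfl
end lin

section bilin
variable {n : ℕ} {κ : Type*} [Fintype κ]

private lemma swap_helper {α : Type*} [Fintype α] (A : α → ℝ) (B : κ → ℝ) (C : α → κ → ℝ) :
    ∑ s, A s * ∑ k, B k * C s k = ∑ k, B k * ∑ s, A s * C s k := by
  simp only [Finset.mul_sum]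
  rw [Finset.sum_comm]
  exact Finset.sum_congr rfl fun k _ => Finset.sum_congr rfl fun s _ => by ring

private lemma swap_helper2 {α : Type*} [Fintype α] (A : α → ℝ) (B : κ → ℝ) (C : κ → α → ℝ) :
    ∑ s, (∑ k, B k * C k s) * A s = ∑ k, B k * ∑ s, C k s * A s := by
  simp only [Finset.sum_mul, Finset.mul_sum]
  rw [Finset.sum_comm]
  exact Finset.sum_congr rfl fun k _ => Finset.sum_congr rfl fun s _ => by ring

lemma poisson_sum_right (g : ((Fin n ⊕ Fin n) → ℝ) → ℝ) (f : κ → ((Fin n ⊕ Fin n) → ℝ) → ℝ)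
    (hf : ∀ k, ContDiff ℝ (⊤ : ℕ∞) (f k)) (c : κ → ℝ) (x : (Fin n ⊕ Fin n) → ℝ) :
    poisson g (fun y => ∑ k, c k * f k y) x = ∑ k, c k * poisson g (f k) x := by
  rw [show poisson g (fun y => ∑ k, c k * f k y) x
      = ∑ s, mgrad g x s * ∑ t, symJ n s t * mgrad (fun y => ∑ k, c k * f k y) x t from rfl]
  rw [show (∑ k, c k * poisson g (f k) x)
      = ∑ k, c k * ∑ s, mgrad g x s * ∑ t, symJ n s t * mgrad (f k) x t from rfl]
  simp only [mgrad_sum f hf c x]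
  have h1 : ∀ s, (∑ t, symJ n s t * ∑ k, c k * mgrad (f k) x t)
      = ∑ k, c k * ∑ t, symJ n s t * mgrad (f k) x t := fun s => swap_helper _ _ _
  simp only [h1]
  exact swap_helper _ _ _

lemma poisson_sum_left (g : ((Fin n ⊕ Fin n) → ℝ) → ℝ) (f : κ → ((Fin n ⊕ Fin n) → ℝ) → ℝ)
    (hf : ∀ k, ContDiff ℝ (⊤ : ℕ∞) (f k)) (c : κ → ℝ) (x : (Fin n ⊕ Fin n) → ℝ) :
    poisson (fun y => ∑ k, c k * f k y) g x = ∑ k, c k * poisson (f k) g x := by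
  rw [show poisson (fun y => ∑ k, c k * f k y) g x
      = ∑ s, mgrad (fun y => ∑ k, c k * f k y) x s * ∑ t, symJ n s t * mgrad g x t from rfl]
  rw [show (∑ k, c k * poisson (f k) g x)
      = ∑ k, c k * ∑ s, mgrad (f k) x s * ∑ t, symJ n s t * mgrad g x t from rfl]
  simp only [mgrad_sum f hf c x]
  exact swap_helper2 _ _ _
end bilin


lemma poisson_skew {n : ℕ} (f g : ((Fin n ⊕ Fin n) → ℝ) → ℝ) (x : (Fin n ⊕ Fin n) → ℝ) :
    poisson g f x = -poisson f g x := by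
  unfold poisson
  rw [Matrix.dotProduct_mulVec]
  conv_lhs => rw [← Matrix.transpose_transpose (symJ n), Matrix.vecMul_transpose]
  rw [symJ_transpose, Matrix.neg_mulVec, neg_dotProduct, dotProduct_comm]

lemma mgrad_zero_fun {ι : Type*} [Fintype ι] [DecidableEq ι] (x : ι → ℝ) :
    mgrad (fun _ : ι → ℝ => (0:ℝ)) x = 0 := by
  funext j
  simp [mgrad]


/-- For a non-commutative integrable system, on each level set `F⁻¹(λ₀)` one can construct
`r = 2n−l` everywhere linearly independent smooth vector fields, tangent to the level set,
commuting among themselves and with the Hamiltonian vector field `X_H = J·∇H` there. -/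
theorem NCI_gives_commuting_tangent_fields
    (n l : ℕ)
    (H : ((Fin n ⊕ Fin n) → ℝ) → ℝ) (hH : ContDiff ℝ (⊤ : ℕ∞) H)
    (F : Fin l → ((Fin n ⊕ Fin n) → ℝ) → ℝ) (hF : ∀ i, ContDiff ℝ (⊤ : ℕ∞) (F i))
    (hind : ∀ x, (mjac (fun y i => F i y) x).rank = l)
    (hfi : ∀ i x, poisson (F i) H x = 0)
    (hiso : ∀ x, Module.finrank ℝ (LinearMap.ker (Matrix.mulVecLin
      (Matrix.of fun i j : Fin l => poisson (F i) (F j) x))) = 2 * n - l)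
    (P : Fin l → Fin l → (Fin l → ℝ) → ℝ)
    (hP : ∀ i j, ContDiffOn ℝ (⊤ : ℕ∞) (P i j) (Set.range fun x k => F k x))
    (hclos : ∀ i j x, poisson (F i) (F j) x = P i j (fun k => F k x))
    (lam0 : Fin l → ℝ) (hlam0 : lam0 ∈ Set.range fun x k => F k x) :
    ∃ X : Fin (2 * n - l) → ((Fin n ⊕ Fin n) → ℝ) → ((Fin n ⊕ Fin n) → ℝ),
      (∀ i, ContDiff ℝ (⊤ : ℕ∞) (X i)) ∧
      (∀ x, LinearIndependent ℝ fun i => X i x) ∧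
      ∀ x, (∀ k, F k x = lam0 k) →
        (∀ i, (mjac (fun y k => F k y) x).mulVec (X i x) = 0) ∧
        (∀ i j, mlie (X i) (X j) x = 0) ∧
        (∀ i, mlie (X i) (fun y => (symJ n).mulVec (mgrad H y)) x = 0) := by
  classical
  obtain ⟨x₀, hx₀⟩ := hlam0
  have hx₀' : (fun k => F k x₀) = lam0 := hx₀
  set Qm : ((Fin n ⊕ Fin n) → ℝ) → Matrix (Fin l) (Fin l) ℝ :=
    fun x => Matrix.of fun i j => poisson (F i) (F j) x with hQm
  have hQanti : ∀ y, (Qm y)ᵀ = -(Qm y) := by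
    intro y; ext i j
    exact poisson_skew (F i) (F j) y
  set K := LinearMap.ker (Qm x₀).mulVecLin with hKdef
  have hKr : Module.finrank ℝ K = 2 * n - l := hiso x₀
  set bas := Module.finBasisOfFinrankEq ℝ K hKr with hbas
  set a : Fin (2 * n - l) → (Fin l → ℝ) := fun i => ↑(bas i) with ha
  have haK : ∀ i, (Qm x₀).mulVec (a i) = 0 := by
    intro i
    exact LinearMap.mem_ker.1 (bas i).2
  set g : Fin (2 * n - l) → ((Fin n ⊕ Fin n) → ℝ) → ℝ :=
    fun i => fun y => ∑ k, a i k * F k y with hgdef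
  have hg : ∀ i, ContDiff ℝ (⊤ : ℕ∞) (g i) := fun i => contDiff_lincomb F hF (a i)
  refine ⟨fun i => fun x => (symJ n).mulVec (mgrad (g i) x), ?_, ?_, ?_⟩
  · -- smoothness
    intro i
    apply contDiff_pi.2
    intro c
    show ContDiff ℝ (⊤ : ℕ∞) fun x => ∑ t, symJ n c t * mgrad (g i) x t
    exact ContDiff.sum fun t _ => contDiff_const.mul (mgrad_contDiff (hg i) t)
  · -- linear independence
    intro x
    set A := mjac (fun y k => F k y) x with hA
    have hjac : A = Matrix.of fun k j => mgrad (F k) x j := mjac_pi F hF x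
    set φ : (Fin l → ℝ) →ₗ[ℝ] ((Fin n ⊕ Fin n) → ℝ) :=
      (symJ n).mulVecLin.comp (Aᵀ).mulVecLin with hφ
    have hφa : ∀ i, φ (a i) = (symJ n).mulVec (mgrad (g i) x) := by
      intro i
      show (symJ n).mulVec ((Aᵀ).mulVec (a i)) = _
      have h1 : (Aᵀ).mulVec (a i) = mgrad (g i) x := by
        funext j
        have h2 : ((Aᵀ).mulVec (a i)) j = ∑ k, A k j * a i k := by
          simp [Matrix.mulVec, dotProduct, Matrix.transpose_apply]
        rw [h2, show mgrad (g i) x j = ∑ k, a i k * mgrad (F k) x j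
          from mgrad_sum F hF (a i) x j, hjac]
        exact Finset.sum_congr rfl fun k _ => mul_comm _ _
      rw [h1]
    have hφinj : Function.Injective φ := by
      have hrk : (Aᵀ).rank = l := by rw [Matrix.rank_transpose, hA, hind x]
      have hkerT : LinearMap.ker (Aᵀ).mulVecLin = ⊥ := by
        apply Submodule.finrank_eq_zero.mp
        have h3 := LinearMap.finrank_range_add_finrank_ker (Aᵀ).mulVecLin
        have h4 : Module.finrank ℝ (Fin l → ℝ) = l := by
          simp [Module.finrank_fintype_fun_eq_card]
        rw [h4] at h3
        have h5 : Module.finrank ℝ (LinearMap.range (Aᵀ).mulVecLin) = l := hrk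
        omega
      intro u v huv
      have h6 : (Aᵀ).mulVec u = (Aᵀ).mulVec v := symJ_mulVec_injective n huv
      have h7 : (Aᵀ).mulVecLin (u - v) = 0 := by
        rw [map_sub]
        show (Aᵀ).mulVec u - (Aᵀ).mulVec v = 0
        rw [h6, sub_self]
      have := hkerT ▸ (LinearMap.mem_ker.2 h7)
      exact sub_eq_zero.mp (by simpa using this)
    have hli : LinearIndependent ℝ a := by
      have := bas.linearIndependent
      exact this.map' K.subtype K.ker_subtype
    have := hli.map' φ (LinearMap.ker_eq_bot.2 hφinj)
    convert this using 1
    funext i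
    exact (hφa i).symm
    all_goals rfl
  · -- properties on the level set
    intro x hx
    have hxlam : (fun k => F k x) = lam0 := funext hx
    have hQconst : Qm x = Qm x₀ := by
      ext i j
      show poisson (F i) (F j) x = poisson (F i) (F j) x₀
      rw [hclos, hclos, hxlam, ← hx₀']
    have haKx : ∀ i, (Qm x).mulVec (a i) = 0 := by
      intro i; rw [hQconst]; exact haK i
    refine ⟨?_, ?_, ?_⟩
    · -- tangency
      intro i
      rw [mjac_pi F hF x]
      funext k
      have h1 : ((Matrix.of fun k j => mgrad (F k) x j).mulVec
          ((symJ n).mulVec (mgrad (g i) x))) k = poisson (F k) (g i) x := rfl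
      rw [h1, hgdef]
      rw [poisson_sum_right (F k) F hF (a i) x]
      have h2 : ((Qm x).mulVec (a i)) k = ∑ m, poisson (F k) (F m) x * a i m := rfl
      have h3 : ∑ m, a i m * poisson (F k) (F m) x = ((Qm x).mulVec (a i)) k := by
        rw [h2]
        exact Finset.sum_congr rfl fun m _ => mul_comm _ _
      rw [h3, haKx i]
    · -- commutation among the fields
      intro i j
      rw [mlie_ham (hg i) (hg j) x]
      suffices hsuff : mgrad (poisson (g i) (g j)) x = 0 by
        rw [hsuff, Matrix.mulVec_zero, neg_zero]
      have hpt : ∀ y, poisson (g i) (g j) y = (a i) ⬝ᵥ ((Qm y).mulVec (a j)) := by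
        intro y
        rw [hgdef]
        rw [poisson_sum_left (fun y => ∑ k, a j k * F k y) F hF (a i) y]
        have h4 : (a i) ⬝ᵥ ((Qm y).mulVec (a j))
            = ∑ k, a i k * ∑ m, poisson (F k) (F m) y * a j m := rfl
        rw [h4]
        apply Finset.sum_congr rfl
        intro k _
        rw [poisson_sum_right (F k) F hF (a j) y]
        congr 1
        exact Finset.sum_congr rfl fun m _ => mul_comm _ _
      funext c
      show fderiv ℝ (poisson (g i) (g j)) x (Pi.single c 1) = 0
      set v : (Fin n ⊕ Fin n) → ℝ := Pi.single c 1 with hv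
      have hline : ∀ t : ℝ, HasDerivAt (fun s : ℝ => x + s • v) v t := by
        intro t
        simpa using ((hasDerivAt_id t).smul_const v).const_add x
      have hdiffp : Differentiable ℝ (poisson (g i) (g j)) :=
        (poisson_contDiff (hg i) (hg j)).differentiable (by simp : ((⊤ : ℕ∞) : WithTop ℕ∞) ≠ 0)
      have hcomp : HasDerivAt (fun t : ℝ => poisson (g i) (g j) (x + t • v))
          (fderiv ℝ (poisson (g i) (g j)) x v) 0 := by
        have h0 : x + (0:ℝ) • v = x := by simp
        have := (hdiffp (x + (0:ℝ) • v)).hasFDerivAt.comp_hasDerivAt 0 (hline 0)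
        rw [h0] at this
        exact this
      have hcomp2 : HasDerivAt (fun t : ℝ => (a i) ⬝ᵥ ((Qm (x + t • v)).mulVec (a j)))
          (fderiv ℝ (poisson (g i) (g j)) x v) 0 := by
        have heq : (fun t : ℝ => poisson (g i) (g j) (x + t • v))
            = fun t : ℝ => (a i) ⬝ᵥ ((Qm (x + t • v)).mulVec (a j)) :=
          funext fun t => hpt (x + t • v)
        rw [← heq]
        exact hcomp
      have hkey : HasDerivAt (fun t : ℝ => (a i) ⬝ᵥ ((Qm (x + t • v)).mulVec (a j))) 0 0 := by
        apply key_deriv (fun t => Qm (x + t • v)) ?_ (fun t => hQanti _)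
          (fun t => hiso _) (a j) (a i) ?_ ?_
        · intro i' j'
          have hpc : ContDiff ℝ (⊤ : ℕ∞) (poisson (F i') (F j')) := poisson_contDiff (hF i') (hF j')
          have hlind : DifferentiableAt ℝ (fun s : ℝ => x + s • v) 0 :=
            (hline 0).differentiableAt
          show DifferentiableAt ℝ (fun t : ℝ => poisson (F i') (F j') (x + t • v)) 0
          have hcp := DifferentiableAt.comp (𝕜 := ℝ) 0
            ((hpc.differentiable (by simp : ((⊤ : ℕ∞) : WithTop ℕ∞) ≠ 0)) (x + (0:ℝ) • v)) hlind
          exact hcp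
        · show Qm (x + (0:ℝ) • v) *ᵥ a j = 0
          have h0 : x + (0:ℝ) • v = x := by simp
          rw [h0]; exact haKx j
        · show Qm (x + (0:ℝ) • v) *ᵥ a i = 0
          have h0 : x + (0:ℝ) • v = x := by simp
          rw [h0]; exact haKx i
      exact hcomp2.unique hkey
    · -- commutation with the Hamiltonian field
      intro i
      rw [mlie_ham (hg i) hH x]
      have hz : poisson (g i) H = fun _ => (0:ℝ) := by
        funext y
        rw [hgdef, poisson_sum_left H F hF (a i) y]
        simp [hfi _ y]
      rw [hz, mgrad_zero_fun, Matrix.mulVec_zero, neg_zero]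
end

section
/- Let H : ℝ^{2n} → ℝ be smooth, U, Λ ⊆ ℝ^n open, and W : U × Λ → ℝ smooth such that there is a function h : Λ → ℝ with H(q, ∂W/∂q(q,λ)) = h(λ) for all (q,λ) ∈ U × Λ, the n×n matrix ∂²W/∂λ∂q(q,λ) is invertible for all (q,λ), and the map Σ(q,λ) := (q, ∂W/∂q(q,λ)) is a diffeomorphism of U × Λ onto an open set V ⊆ ℝ^{2n}. Define F = (F_1,...,F_n) := 𝔭 ∘ Σ^{-1} : V → ℝ^n, where 𝔭(q,λ) = λ. Then at every point of V: the Jacobian DF has rank n, {F_i, H} = 0 for all i, and {F_i, F_j} = 0 for all i,j. -/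
open Matrix

open scoped ContDiff

lemma clm_expand {ι : Type*} [Fintype ι] [DecidableEq ι] {F : Type*} [NormedAddCommGroup F]
    [NormedSpace ℝ F] (T : (ι → ℝ) →L[ℝ] F) (t : ι → ℝ) :
    T t = ∑ s, t s • T (Pi.single s 1) := by
  have h : t = ∑ s, t s • (Pi.single s 1 : ι → ℝ) := by
    funext j
    simp [Pi.single_apply, Finset.sum_ite_eq]
  conv_lhs => rw [h]
  rw [map_sum]
  exact Finset.sum_congr rfl fun s _ => T.map_smul _ _

lemma symJ_mulVec (n : ℕ) (w : (Fin n ⊕ Fin n) → ℝ) :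
    (symJ n).mulVec w = Sum.elim (fun k => w (Sum.inr k)) (fun k => -w (Sum.inl k)) := by
  funext s
  cases s with
  | inl k => simp [symJ, Matrix.mulVec, dotProduct, Fintype.sum_sum_type, Matrix.one_apply,
      ite_mul, Finset.sum_ite_eq]
  | inr k => simp [symJ, Matrix.mulVec, dotProduct, Fintype.sum_sum_type, Matrix.one_apply,
      ite_mul, Finset.sum_ite_eq]

lemma sum_Q_comm {n : ℕ} (Q : Matrix (Fin n) (Fin n) ℝ) (hQ : ∀ i j, Q i j = Q j i)
    (c d : Fin n → ℝ) :
    ∑ k, (∑ m, Q m k * c m) * d k = ∑ k, (∑ m, Q m k * d m) * c k := by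
  simp_rw [Finset.sum_mul]
  rw [Finset.sum_comm]
  refine Finset.sum_congr rfl fun k _ => Finset.sum_congr rfl fun m _ => ?_
  rw [hQ]; ring

/-- Standard Hamilton–Jacobi theory: a complete solution `Σ(q,λ) = (q, ∂W/∂q(q,λ))` of the
Hamilton–Jacobi equation yields, via `F = 𝔭 ∘ Σ⁻¹`, `n` independent first integrals of `H`
in involution. -/
theorem standard_complete_solution_gives_CI
    (n : ℕ)
    (H : ((Fin n ⊕ Fin n) → ℝ) → ℝ) (hH : ContDiff ℝ (⊤ : ℕ∞) H)
    (U Λ : Set (Fin n → ℝ)) (hU : IsOpen U) (hΛ : IsOpen Λ)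
    (W : (Fin n → ℝ) × (Fin n → ℝ) → ℝ) (hW : ContDiffOn ℝ (⊤ : ℕ∞) W (U ×ˢ Λ))
    (h : (Fin n → ℝ) → ℝ)
    (hh : ∀ q ∈ U, ∀ lam ∈ Λ,
      H (Sum.elim q (fun i => fderiv ℝ (fun y => W (y, lam)) q (Pi.single i 1))) = h lam)
    (hmix : ∀ q ∈ U, ∀ lam ∈ Λ,
      (Matrix.of fun i j : Fin n =>
        fderiv ℝ (fun μ => fderiv ℝ (fun y => W (y, μ)) q (Pi.single i 1))
          lam (Pi.single j 1)).det ≠ 0)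
    (V : Set ((Fin n ⊕ Fin n) → ℝ)) (hV : IsOpen V)
    (S : (Fin n → ℝ) × (Fin n → ℝ) → (Fin n ⊕ Fin n) → ℝ)
    (hSdef : ∀ q lam, S (q, lam) =
      Sum.elim q (fun i => fderiv ℝ (fun y => W (y, lam)) q (Pi.single i 1)))
    (Sinv : ((Fin n ⊕ Fin n) → ℝ) → (Fin n → ℝ) × (Fin n → ℝ))
    (hSinv : ContDiffOn ℝ (⊤ : ℕ∞) Sinv V)
    (hSmaps : ∀ w ∈ U ×ˢ Λ, S w ∈ V)
    (hleft : ∀ w ∈ U ×ˢ Λ, Sinv (S w) = w)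
    (hright : ∀ y ∈ V, Sinv y ∈ U ×ˢ Λ ∧ S (Sinv y) = y) :
    ∀ y ∈ V,
      (mjac (fun z => (Sinv z).2) y).rank = n ∧
      (∀ i : Fin n, poisson (fun z => (Sinv z).2 i) H y = 0) ∧
      (∀ i j : Fin n,
        poisson (fun z => (Sinv z).2 i) (fun z => (Sinv z).2 j) y = 0) := by
  intro y hy
  obtain ⟨hmem, hSy⟩ := hright y hy
  set p : (Fin n → ℝ) × (Fin n → ℝ) := Sinv y with hp
  have hqU : p.1 ∈ U := hmem.1
  have hlamΛ : p.2 ∈ Λ := hmem.2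
  have hUΛ : IsOpen (U ×ˢ Λ) := hU.prod hΛ
  have hnp : U ×ˢ Λ ∈ nhds p := hUΛ.mem_nhds hmem
  -- differentiability of W and its derivative
  have hWdiff : ∀ w ∈ U ×ˢ Λ, DifferentiableAt ℝ W w := fun w hw =>
    (hW.contDiffAt (hUΛ.mem_nhds hw)).differentiableAt (by simp)
  have hfderivW : ContDiffOn ℝ ∞ (fderiv ℝ W) (U ×ˢ Λ) := hW.fderiv_of_isOpen hUΛ (by simp)
  have hone : (1 : WithTop ℕ∞) ≤ ∞ := by exact_mod_cast (le_top : (1:ℕ∞) ≤ ⊤)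
  have hB₂d : DifferentiableAt ℝ (fderiv ℝ W) p :=
    (hfderivW.contDiffAt hnp).differentiableAt (by simp)
  set B₂ := fderiv ℝ (fderiv ℝ W) p with hB₂def
  have hB₂ : HasFDerivAt (fderiv ℝ W) B₂ p := hB₂d.hasFDerivAt
  have hsym : ∀ v u, B₂ v u = B₂ u v := fun v u =>
    second_derivative_symmetric_of_eventually
      (Filter.eventually_of_mem hnp fun w hw => (hWdiff w hw).hasFDerivAt) hB₂ v u
  -- partial derivatives of W in the first variable
  have hpart : ∀ w : (Fin n → ℝ) × (Fin n → ℝ), w ∈ U ×ˢ Λ → ∀ v,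
      fderiv ℝ (fun y' => W (y', w.2)) w.1 v = fderiv ℝ W w (v, 0) := by
    intro w hw v
    have h1 : HasFDerivAt (fun y' : Fin n → ℝ => (y', w.2))
        ((ContinuousLinearMap.id ℝ (Fin n → ℝ)).prod 0) w.1 :=
      HasFDerivAt.prodMk (hasFDerivAt_id _) (hasFDerivAt_const _ _)
    have h2 : HasFDerivAt (fun y' : Fin n → ℝ => W (y', w.2))
        ((fderiv ℝ W w).comp ((ContinuousLinearMap.id ℝ (Fin n → ℝ)).prod 0)) w.1 :=
      (hWdiff w hw).hasFDerivAt.comp w.1 h1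
    rw [h2.fderiv]
    simp
  -- the two second-derivative matrices
  set Q : Matrix (Fin n) (Fin n) ℝ :=
    Matrix.of (fun i j => B₂ ((Pi.single j 1 : Fin n → ℝ), 0) ((Pi.single i 1 : Fin n → ℝ), 0))
    with hQdef
  set M : Matrix (Fin n) (Fin n) ℝ :=
    Matrix.of (fun i j => B₂ ((0 : Fin n → ℝ), (Pi.single j 1 : Fin n → ℝ))
      ((Pi.single i 1 : Fin n → ℝ), 0)) with hMdef
  have hQsym : ∀ i j, Q i j = Q j i := fun i j => hsym _ _
  -- the derivative of S at p
  set c : (Fin n ⊕ Fin n) → ((Fin n → ℝ) × (Fin n → ℝ)) →L[ℝ] ℝ :=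
    Sum.elim
      (fun k => (ContinuousLinearMap.proj k).comp
        (ContinuousLinearMap.fst ℝ (Fin n → ℝ) (Fin n → ℝ)))
      (fun i => (ContinuousLinearMap.apply ℝ ℝ
        (((Pi.single i 1 : Fin n → ℝ), (0 : Fin n → ℝ)))).comp B₂) with hcdef
  set L := ContinuousLinearMap.pi c with hLdef
  have hLeval : ∀ (u : (Fin n → ℝ) × (Fin n → ℝ)) (s : Fin n ⊕ Fin n),
      L u s = Sum.elim (fun k => u.1 k) (fun i => B₂ u ((Pi.single i 1 : Fin n → ℝ), 0)) s := by
    intro u s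
    cases s <;> simp [hLdef, hcdef]
  have hS' : HasFDerivAt S L p := by
    apply hasFDerivAt_pi''
    intro s
    rw [hLdef, ContinuousLinearMap.proj_pi]
    cases s with
    | inl k =>
      have hfun : (fun w : (Fin n → ℝ) × (Fin n → ℝ) => S w (Sum.inl k))
          = fun w : (Fin n → ℝ) × (Fin n → ℝ) => w.1 k := by
        funext w
        have h0 : S w = Sum.elim w.1
            (fun i => fderiv ℝ (fun y' => W (y', w.2)) w.1 (Pi.single i 1)) := hSdef w.1 w.2
        rw [h0]; rfl
      rw [hfun]
      exact ((ContinuousLinearMap.proj k).comp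
        (ContinuousLinearMap.fst ℝ (Fin n → ℝ) (Fin n → ℝ))).hasFDerivAt
    | inr i =>
      have hev : (fun w : (Fin n → ℝ) × (Fin n → ℝ) => S w (Sum.inr i)) =ᶠ[nhds p]
          fun w => fderiv ℝ W w ((Pi.single i 1 : Fin n → ℝ), 0) := by
        filter_upwards [hnp] with w hw
        have h0 : S w = Sum.elim w.1
            (fun i' => fderiv ℝ (fun y' => W (y', w.2)) w.1 (Pi.single i' 1)) := hSdef w.1 w.2
        rw [h0]
        exact hpart w hw _
      have hg : HasFDerivAt
          (fun w : (Fin n → ℝ) × (Fin n → ℝ) =>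
            fderiv ℝ W w ((Pi.single i 1 : Fin n → ℝ), 0))
          ((ContinuousLinearMap.apply ℝ ℝ
            (((Pi.single i 1 : Fin n → ℝ), (0 : Fin n → ℝ)))).comp B₂) p := by
        have hg0 : HasFDerivAt
            ((ContinuousLinearMap.apply ℝ ℝ
              (((Pi.single i 1 : Fin n → ℝ), (0 : Fin n → ℝ)))) ∘ (fderiv ℝ W))
            ((ContinuousLinearMap.apply ℝ ℝ
              (((Pi.single i 1 : Fin n → ℝ), (0 : Fin n → ℝ)))).comp B₂) p :=
          (ContinuousLinearMap.apply ℝ ℝ _).hasFDerivAt.comp p hB₂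
        exact hg0
      exact hg.congr_of_eventuallyEq hev
  -- the derivative of F = snd ∘ Sinv at y
  have hSinvd : DifferentiableAt ℝ Sinv y :=
    (hSinv.contDiffAt (hV.mem_nhds hy)).differentiableAt (by simp)
  have hGd : DifferentiableAt ℝ (fun z => (Sinv z).2) y := hSinvd.snd
  set A' := fderiv ℝ (fun z => (Sinv z).2) y with hA'def
  have hGy : HasFDerivAt (fun z => (Sinv z).2) A' y := hGd.hasFDerivAt
  have hGS : HasFDerivAt ((fun z => (Sinv z).2) ∘ S) (A'.comp L) p := by
    refine HasFDerivAt.comp p ?_ hS'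
    have : S p = y := hSy
    rw [this]
    exact hGy
  have hev1 : ((fun z => (Sinv z).2) ∘ S) =ᶠ[nhds p]
      (fun w : (Fin n → ℝ) × (Fin n → ℝ) => w.2) := by
    filter_upwards [hnp] with w hw
    simp only [Function.comp_apply, hleft w hw]
  have hkey1 : A'.comp L = ContinuousLinearMap.snd ℝ (Fin n → ℝ) (Fin n → ℝ) :=
    (hGS.congr_of_eventuallyEq hev1.symm).unique hasFDerivAt_snd
  -- the derivative of H
  have hHd : HasFDerivAt H (fderiv ℝ H y) y :=
    ((hH.differentiable (by simp)) y).hasFDerivAt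
  set DH := fderiv ℝ H y with hDHdef
  set inlE : (Fin n → ℝ) →L[ℝ] ((Fin n → ℝ) × (Fin n → ℝ)) :=
    (ContinuousLinearMap.id ℝ (Fin n → ℝ)).prod 0 with hinlE
  have hφ : HasFDerivAt (H ∘ fun q' : Fin n → ℝ => S (q', p.2))
      (DH.comp (L.comp inlE)) p.1 := by
    have h1 : HasFDerivAt (fun q' : Fin n → ℝ => (q', p.2)) inlE p.1 :=
      HasFDerivAt.prodMk (hasFDerivAt_id _) (hasFDerivAt_const _ _)
    have h2 : HasFDerivAt (fun q' : Fin n → ℝ => S (q', p.2)) (L.comp inlE) p.1 :=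
      hS'.comp p.1 h1
    have h3 : HasFDerivAt H DH (S (p.1, p.2)) := by
      have : S (p.1, p.2) = y := hSy
      rw [this]; exact hHd
    exact h3.comp p.1 h2
  have hφc : (H ∘ fun q' : Fin n → ℝ => S (q', p.2)) =ᶠ[nhds p.1]
      (fun _ => h p.2) := by
    filter_upwards [hU.mem_nhds hqU] with q' hq'
    have h0 : S (q', p.2) = Sum.elim q'
        (fun i => fderiv ℝ (fun y' => W (y', p.2)) q' (Pi.single i 1)) := hSdef q' p.2
    simp only [Function.comp_apply, h0]
    exact hh q' hq' p.2 hlamΛ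
  have hkey2 : DH.comp (L.comp inlE) = 0 :=
    (hφ.congr_of_eventuallyEq hφc.symm).unique (hasFDerivAt_const _ _)
  -- the mixed second derivative matrix from the hypothesis equals M
  have hdetM : M.det ≠ 0 := by
    have hMeq : (Matrix.of fun i j : Fin n =>
        fderiv ℝ (fun μ => fderiv ℝ (fun y' => W (y', μ)) p.1 (Pi.single i 1))
          p.2 (Pi.single j 1)) = M := by
      ext i j
      have hev : (fun μ => fderiv ℝ (fun y' => W (y', μ)) p.1 (Pi.single i 1)) =ᶠ[nhds p.2]
          (fun μ => fderiv ℝ W (p.1, μ) ((Pi.single i 1 : Fin n → ℝ), 0)) := by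
        filter_upwards [hΛ.mem_nhds hlamΛ] with μ hμ
        exact hpart (p.1, μ) ⟨hqU, hμ⟩ _
      have h1 : HasFDerivAt (fun μ : Fin n → ℝ => ((p.1 : Fin n → ℝ), μ))
          ((0 : (Fin n → ℝ) →L[ℝ] (Fin n → ℝ)).prod (ContinuousLinearMap.id ℝ (Fin n → ℝ)))
          p.2 := HasFDerivAt.prodMk (hasFDerivAt_const _ _) (hasFDerivAt_id _)
      have h2 : HasFDerivAt (fun μ : Fin n → ℝ => fderiv ℝ W (p.1, μ))
          (B₂.comp ((0 : (Fin n → ℝ) →L[ℝ] (Fin n → ℝ)).prod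
            (ContinuousLinearMap.id ℝ (Fin n → ℝ)))) p.2 :=
        hB₂.comp p.2 h1
      have h3 : HasFDerivAt
          (fun μ : Fin n → ℝ => fderiv ℝ W (p.1, μ) ((Pi.single i 1 : Fin n → ℝ), 0))
          ((ContinuousLinearMap.apply ℝ ℝ
            (((Pi.single i 1 : Fin n → ℝ), (0 : Fin n → ℝ)))).comp
            (B₂.comp ((0 : (Fin n → ℝ) →L[ℝ] (Fin n → ℝ)).prod
              (ContinuousLinearMap.id ℝ (Fin n → ℝ))))) p.2 := by
        have hg0 : HasFDerivAt
            ((ContinuousLinearMap.apply ℝ ℝ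
              (((Pi.single i 1 : Fin n → ℝ), (0 : Fin n → ℝ)))) ∘
              (fun μ : Fin n → ℝ => fderiv ℝ W (p.1, μ)))
            ((ContinuousLinearMap.apply ℝ ℝ
              (((Pi.single i 1 : Fin n → ℝ), (0 : Fin n → ℝ)))).comp
              (B₂.comp ((0 : (Fin n → ℝ) →L[ℝ] (Fin n → ℝ)).prod
                (ContinuousLinearMap.id ℝ (Fin n → ℝ))))) p.2 :=
          (ContinuousLinearMap.apply ℝ ℝ
            (((Pi.single i 1 : Fin n → ℝ), (0 : Fin n → ℝ)))).hasFDerivAt.comp p.2 h2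
        exact hg0
      have h4 := hev.fderiv_eq (𝕜 := ℝ)
      rw [Matrix.of_apply, h4, h3.fderiv]
      simp [hMdef]
    rw [← hMeq]
    exact hmix p.1 hqU p.2 hlamΛ
  -- expansion helpers
  have hexpA : ∀ (v : (Fin n ⊕ Fin n) → ℝ) (k : Fin n),
      A' v k = ∑ s, v s * A' (Pi.single s 1) k := by
    intro v k
    rw [clm_expand A' v]
    simp
  have hexpH : ∀ v : (Fin n ⊕ Fin n) → ℝ, DH v = ∑ s, v s * DH (Pi.single s 1) := by
    intro v
    rw [clm_expand DH v]
    simp [smul_eq_mul]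
  set Ap : Matrix (Fin n) (Fin n) ℝ :=
    Matrix.of (fun i k => A' (Pi.single (Sum.inr k) 1) i) with hApdef
  have hApM : Ap * M = 1 := by
    ext k j
    have h1 : A' (L ((0 : Fin n → ℝ), Pi.single j 1)) = Pi.single j 1 := by
      have h0 := DFunLike.congr_fun hkey1 ((0 : Fin n → ℝ), Pi.single j 1)
      simpa using h0
    have h2 := congrFun h1 k
    rw [hexpA] at h2
    simp only [hLeval, Fintype.sum_sum_type, Sum.elim_inl, Sum.elim_inr, Pi.zero_apply,
      zero_mul, Finset.sum_const_zero, zero_add] at h2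
    have h4 : (Ap * M) k j
        = ∑ i, B₂ ((0 : Fin n → ℝ), Pi.single j 1) ((Pi.single i 1 : Fin n → ℝ), 0)
          * A' (Pi.single (Sum.inr i) 1) k := by
      rw [Matrix.mul_apply]
      exact Finset.sum_congr rfl fun i _ => by
        simp [hApdef, hMdef, mul_comm]
    rw [h4, h2, Matrix.one_apply, Pi.single_apply]
  have hAq : ∀ (k j : Fin n), A' (Pi.single (Sum.inl j) 1) k
      = -∑ i, Q i j * A' (Pi.single (Sum.inr i) 1) k := by
    intro k j
    have h1 : A' (L ((Pi.single j 1 : Fin n → ℝ), (0 : Fin n → ℝ))) = 0 := by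
      have h0 := DFunLike.congr_fun hkey1 ((Pi.single j 1 : Fin n → ℝ), (0 : Fin n → ℝ))
      simpa using h0
    have h2 := congrFun h1 k
    rw [hexpA] at h2
    simp only [hLeval, Fintype.sum_sum_type, Sum.elim_inl, Sum.elim_inr, Pi.zero_apply] at h2
    have h3 : ∑ k' : Fin n, (Pi.single j 1 : Fin n → ℝ) k' * A' (Pi.single (Sum.inl k') 1) k
        = A' (Pi.single (Sum.inl j) 1) k := by
      simp [Pi.single_apply, ite_mul, Finset.sum_ite_eq]
    rw [h3] at h2
    have h5 : ∑ i, Q i j * A' (Pi.single (Sum.inr i) 1) k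
        = ∑ i, B₂ ((Pi.single j 1 : Fin n → ℝ), (0 : Fin n → ℝ))
            ((Pi.single i 1 : Fin n → ℝ), 0) * A' (Pi.single (Sum.inr i) 1) k := by
      exact Finset.sum_congr rfl fun i _ => by simp [hQdef]
    rw [h5]
    linarith [h2]
  have haQ : ∀ j : Fin n, DH (Pi.single (Sum.inl j) 1)
      = -∑ i, Q i j * DH (Pi.single (Sum.inr i) 1) := by
    intro j
    have h1 : DH (L ((Pi.single j 1 : Fin n → ℝ), (0 : Fin n → ℝ))) = 0 := by
      have h0 := DFunLike.congr_fun hkey2 (Pi.single j 1 : Fin n → ℝ)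
      simpa [hinlE] using h0
    rw [hexpH] at h1
    simp only [hLeval, Fintype.sum_sum_type, Sum.elim_inl, Sum.elim_inr, Pi.zero_apply] at h1
    have h3 : ∑ k' : Fin n, (Pi.single j 1 : Fin n → ℝ) k' * DH (Pi.single (Sum.inl k') 1)
        = DH (Pi.single (Sum.inl j) 1) := by
      simp [Pi.single_apply, ite_mul, Finset.sum_ite_eq]
    rw [h3] at h1
    have h5 : ∑ i, Q i j * DH (Pi.single (Sum.inr i) 1)
        = ∑ i, B₂ ((Pi.single j 1 : Fin n → ℝ), (0 : Fin n → ℝ))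
            ((Pi.single i 1 : Fin n → ℝ), 0) * DH (Pi.single (Sum.inr i) 1) := by
      exact Finset.sum_congr rfl fun i _ => by simp [hQdef]
    rw [h5]
    linarith [h1]
  -- values of mgrad
  have hmg : ∀ (i : Fin n) (s : Fin n ⊕ Fin n),
      mgrad (fun z => (Sinv z).2 i) y s = A' (Pi.single s 1) i := by
    intro i s
    have hc : HasFDerivAt (fun z => (Sinv z).2 i)
        ((ContinuousLinearMap.proj i).comp A') y :=
      (ContinuousLinearMap.proj (R := ℝ) (φ := fun _ : Fin n => ℝ) i).hasFDerivAt.comp y hGy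
    have : fderiv ℝ (fun z => (Sinv z).2 i) y = (ContinuousLinearMap.proj i).comp A' :=
      hc.fderiv
    simp [mgrad, this]
  have hmgH : ∀ s, mgrad H y s = DH (Pi.single s 1) := by
    intro s
    simp [mgrad, hDHdef]
  refine ⟨?_, ?_, ?_⟩
  · -- rank
    have hMdet1 : Ap.det * M.det = 1 := by
      have h0 := congrArg Matrix.det hApM
      rwa [Matrix.det_mul, Matrix.det_one] at h0
    have hApUnit : IsUnit Ap :=
      (Matrix.isUnit_iff_isUnit_det Ap).mpr (IsUnit.of_mul_eq_one _ hMdet1)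
    have hrankAp : Ap.rank = n := by
      rw [Matrix.rank_of_isUnit Ap hApUnit, Fintype.card_fin]
    set E0 : Matrix (Fin n ⊕ Fin n) (Fin n) ℝ :=
      Matrix.of (fun s k => if s = Sum.inr k then 1 else 0) with hE0
    have hAE : (mjac (fun z => (Sinv z).2) y) * E0 = Ap := by
      ext i k
      rw [Matrix.mul_apply, Fintype.sum_sum_type]
      simp [hE0, hApdef, mjac, ← hA'def, Finset.sum_ite_eq]
    apply le_antisymm
    · exact le_trans (Matrix.rank_le_card_height _) (by simp)
    · calc n = Ap.rank := hrankAp.symm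
        _ = ((mjac (fun z => (Sinv z).2) y) * E0).rank := by rw [hAE]
        _ ≤ (mjac (fun z => (Sinv z).2) y).rank := Matrix.rank_mul_le_left _ _
  · -- {F i, H} = 0
    intro i
    show mgrad (fun z => (Sinv z).2 i) y ⬝ᵥ (symJ n).mulVec (mgrad H y) = 0
    rw [symJ_mulVec]
    simp only [dotProduct, Fintype.sum_sum_type, Sum.elim_inl, Sum.elim_inr, hmg, hmgH]
    have t1 : ∑ k, A' (Pi.single (Sum.inl k) 1) i * DH (Pi.single (Sum.inr k) 1)
        = -∑ k, (∑ m, Q m k * A' (Pi.single (Sum.inr m) 1) i) * DH (Pi.single (Sum.inr k) 1) := by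
      rw [← Finset.sum_neg_distrib]
      exact Finset.sum_congr rfl fun k _ => by rw [hAq i k, neg_mul]
    have t2 : ∑ k, A' (Pi.single (Sum.inr k) 1) i * -DH (Pi.single (Sum.inl k) 1)
        = ∑ k, (∑ m, Q m k * DH (Pi.single (Sum.inr m) 1)) * A' (Pi.single (Sum.inr k) 1) i := by
      exact Finset.sum_congr rfl fun k _ => by rw [haQ k, neg_neg, mul_comm]
    rw [t1, t2, sum_Q_comm Q hQsym (fun m => A' (Pi.single (Sum.inr m) 1) i)
      (fun k => DH (Pi.single (Sum.inr k) 1))]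
    ring
  · -- {F i, F j} = 0
    intro i j
    show mgrad (fun z => (Sinv z).2 i) y ⬝ᵥ
      (symJ n).mulVec (mgrad (fun z => (Sinv z).2 j) y) = 0
    rw [symJ_mulVec]
    simp only [dotProduct, Fintype.sum_sum_type, Sum.elim_inl, Sum.elim_inr, hmg]
    have t1 : ∑ k, A' (Pi.single (Sum.inl k) 1) i * A' (Pi.single (Sum.inr k) 1) j
        = -∑ k, (∑ m, Q m k * A' (Pi.single (Sum.inr m) 1) i)
            * A' (Pi.single (Sum.inr k) 1) j := by
      rw [← Finset.sum_neg_distrib]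
      exact Finset.sum_congr rfl fun k _ => by rw [hAq i k, neg_mul]
    have t2 : ∑ k, A' (Pi.single (Sum.inr k) 1) i * -A' (Pi.single (Sum.inl k) 1) j
        = ∑ k, (∑ m, Q m k * A' (Pi.single (Sum.inr m) 1) j)
            * A' (Pi.single (Sum.inr k) 1) i := by
      exact Finset.sum_congr rfl fun k _ => by rw [hAq j k, neg_neg, mul_comm]
    rw [t1, t2, sum_Q_comm Q hQsym (fun m => A' (Pi.single (Sum.inr m) 1) i)
      (fun k => A' (Pi.single (Sum.inr k) 1) j)]
    ring
end

section
/- Let H : ℝ^{2n} → ℝ and σ̂ : ℝ^n → ℝ^n be smooth, and define σ : ℝ^n → ℝ^{2n} by σ(q) = (q, σ̂(q)). Then the following are equivalent: (a) D(H ∘ σ)(q) = 0 and ∂σ̂_i/∂q_j(q) = ∂σ̂_j/∂q_i(q) for all i,j and all q ∈ ℝ^n (i.e. σ̂ᵀ = ∇W for a Hamilton characteristic function W solving the Hamilton–Jacobi equation); (b) ∇H(σ(q)) ∈ Im(J·Dσ(q)) and Dσ(q)ᵀ·J·Dσ(q) = 0 for all q ∈ ℝ^n. -/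
open Matrix

/-- Auxiliary: a continuous linear functional on a finite pi type is determined by the
values on the coordinate vectors. -/
lemma clm_apply_eq_sum_s11 {ι : Type*} [Fintype ι] [DecidableEq ι]
    (T : (ι → ℝ) →L[ℝ] ℝ) (v : ι → ℝ) :
    T v = ∑ j, v j * T (Pi.single j 1) := by
  have hv : v = ∑ j, v j • (Pi.single j 1 : ι → ℝ) := by
    funext k
    simp [Finset.sum_apply, Pi.single_apply]
  calc T v = T (∑ j, v j • (Pi.single j 1 : ι → ℝ)) := by rw [← hv]
    _ = ∑ j, v j * T (Pi.single j 1) := by rw [map_sum]; simp [smul_eq_mul]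

/-- The derivative of the graph map `y ↦ (y, σ̂ y)`. -/
noncomputable def Lmap (n : ℕ) (D : (Fin n → ℝ) →L[ℝ] (Fin n → ℝ)) :
    (Fin n → ℝ) →L[ℝ] ((Fin n ⊕ Fin n) → ℝ) :=
  ContinuousLinearMap.pi
    (Sum.elim (fun i => ContinuousLinearMap.proj i)
      (fun i => (ContinuousLinearMap.proj i).comp D))

lemma hasFDerivAt_graph {n : ℕ} {σhat : (Fin n → ℝ) → (Fin n → ℝ)}
    {D : (Fin n → ℝ) →L[ℝ] (Fin n → ℝ)} {q : Fin n → ℝ}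
    (hD : HasFDerivAt σhat D q) :
    HasFDerivAt (fun y => Sum.elim y (σhat y)) (Lmap n D) q := by
  apply hasFDerivAt_pi''
  rintro (i | i) <;> rw [Lmap, ContinuousLinearMap.proj_pi]
  · exact hasFDerivAt_apply i q
  · exact hasFDerivAt_pi'.1 hD i

/-- The purely algebraic heart of the equivalence. -/
lemma key_alg (n : ℕ) (M : Matrix (Fin n) (Fin n) ℝ) (g : (Fin n ⊕ Fin n) → ℝ) :
    ((∀ j, g (Sum.inl j) + ∑ k, M k j * g (Sum.inr k) = 0) ∧ (∀ i j, M i j = M j i))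
    ↔ ((∃ x : Fin n → ℝ,
          ∀ s, Sum.elim (fun i => ∑ k, M i k * x k) (fun i => -x i) s = g s) ∧
        (∀ i j, M i j - M j i = 0)) := by
  constructor
  · rintro ⟨h1, h2⟩
    refine ⟨⟨fun i => -g (Sum.inr i), ?_⟩, fun i j => by rw [h2 i j]; ring⟩
    rintro (i | i)
    · simp only [Sum.elim_inl]
      have e1 : ∑ k, M i k * -g (Sum.inr k) = -∑ k, M i k * g (Sum.inr k) := by
        simp [mul_neg]
      have e2 : ∑ k, M i k * g (Sum.inr k) = ∑ k, M k i * g (Sum.inr k) :=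
        Finset.sum_congr rfl fun k _ => by rw [h2]
      have := h1 i
      rw [e1, e2]; linarith
    · simp
  · rintro ⟨⟨x, hx⟩, h2'⟩
    have h2 : ∀ i j, M i j = M j i := fun i j => by have := h2' i j; linarith
    refine ⟨?_, h2⟩
    intro j
    have hinl := hx (Sum.inl j)
    have hinr : ∀ k, -x k = g (Sum.inr k) := fun k => hx (Sum.inr k)
    simp only [Sum.elim_inl] at hinl
    have e : ∑ k, M k j * g (Sum.inr k) = -∑ k, M j k * x k := by
      rw [← Finset.sum_neg_distrib]
      refine Finset.sum_congr rfl fun k _ => ?_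
      rw [← hinr k, h2 k j]; ring
    rw [e, ← hinl]; ring

/-- For a graph-type map `σ(q) = (q, σ̂(q))`, solving the classical Hamilton–Jacobi
equation (`D(H∘σ) = 0` together with the symmetry `∂σ̂_i/∂q_j = ∂σ̂_j/∂q_i`) is
equivalent to the geometric conditions `∇H∘σ ∈ Im(J·Dσ)` and `Dσᵀ·J·Dσ = 0`. -/
theorem graph_HJE_iff_geometric
    (n : ℕ)
    (H : ((Fin n ⊕ Fin n) → ℝ) → ℝ) (hH : ContDiff ℝ (⊤ : ℕ∞) H)
    (σhat : (Fin n → ℝ) → (Fin n → ℝ)) (hσhat : ContDiff ℝ (⊤ : ℕ∞) σhat) :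
    ((∀ q, fderiv ℝ (fun y => H (Sum.elim y (σhat y))) q = 0) ∧
      (∀ q, ∀ i j : Fin n,
        fderiv ℝ (fun y => σhat y i) q (Pi.single j 1) =
          fderiv ℝ (fun y => σhat y j) q (Pi.single i 1)))
    ↔
    (∀ q, mgrad H (Sum.elim q (σhat q)) ∈ LinearMap.range
        (Matrix.mulVecLin (symJ n * mjac (fun y => Sum.elim y (σhat y)) q)) ∧
      (mjac (fun y => Sum.elim y (σhat y)) q)ᵀ * symJ n *
        mjac (fun y => Sum.elim y (σhat y)) q = 0) := by
  rw [← forall_and]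
  refine forall_congr' fun q => ?_
  have hHdiff : Differentiable ℝ H := hH.differentiable (by simp)
  have hSdiff : Differentiable ℝ σhat := hσhat.differentiable (by simp)
  set D := fderiv ℝ σhat q with hDdef
  have hD : HasFDerivAt σhat D q := (hSdiff q).hasFDerivAt
  have hσ : HasFDerivAt (fun y => Sum.elim y (σhat y)) (Lmap n D) q :=
    hasFDerivAt_graph hD
  have hfσ : fderiv ℝ (fun y => Sum.elim y (σhat y)) q = Lmap n D := hσ.fderiv
  set M : Matrix (Fin n) (Fin n) ℝ := Matrix.of fun i j => D (Pi.single j 1) i with hMdef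
  set A : Matrix (Fin n ⊕ Fin n) (Fin n) ℝ := mjac (fun y => Sum.elim y (σhat y)) q with hAdef
  set g : (Fin n ⊕ Fin n) → ℝ := mgrad H (Sum.elim q (σhat q)) with hgdef
  -- entries of A
  have hAl : ∀ i j, A (Sum.inl i) j = if i = j then 1 else 0 := by
    intro i j
    show fderiv ℝ (fun y => Sum.elim y (σhat y)) q (Pi.single j 1) (Sum.inl i) = _
    rw [hfσ]
    show Pi.single j 1 i = _
    rw [Pi.single_apply]
  have hAr : ∀ i j, A (Sum.inr i) j = M i j := by
    intro i j
    show fderiv ℝ (fun y => Sum.elim y (σhat y)) q (Pi.single j 1) (Sum.inr i) = _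
    rw [hfσ]
    rfl
  -- entries of symJ * A
  have hJA : ∀ s j, (symJ n * A) s j =
      Sum.elim (fun i => M i j) (fun i => -(if i = j then (1:ℝ) else 0)) s := by
    rintro (i | i) j <;>
      simp [Matrix.mul_apply, Fintype.sum_sum_type, symJ, hAl, hAr,
        Matrix.one_apply, ite_mul]
  -- entries of Aᵀ * symJ * A
  have hATJA : ∀ i j, (Aᵀ * symJ n * A) i j = M i j - M j i := by
    intro i j
    rw [Matrix.mul_assoc, Matrix.mul_apply, Fintype.sum_sum_type]
    simp only [Matrix.transpose_apply, hJA, hAl, hAr, Sum.elim_inl, Sum.elim_inr,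
      ite_mul, one_mul, zero_mul, mul_neg, mul_ite, mul_one, mul_zero]
    rw [Finset.sum_ite_eq' Finset.univ i (fun k => M k j)]
    simp [Finset.sum_neg_distrib, Finset.sum_ite_eq', sub_eq_add_neg]
  -- the gradient condition
  have hchain : fderiv ℝ (fun y => H (Sum.elim y (σhat y))) q =
      (fderiv ℝ H (Sum.elim q (σhat q))).comp (Lmap n D) :=
    (((hHdiff _).hasFDerivAt).comp q hσ).fderiv
  have hleft1 : (fderiv ℝ (fun y => H (Sum.elim y (σhat y))) q = 0) ↔
      ∀ j, g (Sum.inl j) + ∑ k, M k j * g (Sum.inr k) = 0 := by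
    rw [hchain]
    have happ : ∀ j : Fin n,
        (fderiv ℝ H (Sum.elim q (σhat q))).comp (Lmap n D) (Pi.single j 1) =
          g (Sum.inl j) + ∑ k, M k j * g (Sum.inr k) := by
      intro j
      rw [ContinuousLinearMap.comp_apply,
        clm_apply_eq_sum_s11 (fderiv ℝ H (Sum.elim q (σhat q))) (Lmap n D (Pi.single j 1)),
        Fintype.sum_sum_type]
      have e1 : ∀ k : Fin n, Lmap n D (Pi.single j 1) (Sum.inl k) = (Pi.single j 1 : Fin n → ℝ) k := by
        intro k; rfl
      have e2 : ∀ k : Fin n, Lmap n D (Pi.single j 1) (Sum.inr k) = M k j := by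
        intro k; rfl
      simp only [e1, e2]
      have e3 : ∑ k, (Pi.single j 1 : Fin n → ℝ) k *
          fderiv ℝ H (Sum.elim q (σhat q)) (Pi.single (Sum.inl k) 1) = g (Sum.inl j) := by
        rw [Finset.sum_eq_single j]
        · simp [hgdef, mgrad]
        · intro k _ hk; simp [Pi.single_apply, hk.symm]
        · intro h; exact absurd (Finset.mem_univ j) h
      rw [e3]
      rfl
    constructor
    · intro h j
      rw [← happ j, h]
      rfl
    · intro h
      refine ContinuousLinearMap.ext fun v => ?_
      rw [ContinuousLinearMap.zero_apply,
        clm_apply_eq_sum_s11 ((fderiv ℝ H (Sum.elim q (σhat q))).comp (Lmap n D)) v]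
      exact Finset.sum_eq_zero fun j _ => by rw [happ j, h j, mul_zero]
  -- the symmetry condition
  have hMc : ∀ i j, fderiv ℝ (fun y => σhat y i) q (Pi.single j 1) = M i j := by
    intro i j
    rw [(hasFDerivAt_pi'.1 hD i).fderiv]
    rfl
  have hleft2 : (∀ i j : Fin n,
      fderiv ℝ (fun y => σhat y i) q (Pi.single j 1) =
        fderiv ℝ (fun y => σhat y j) q (Pi.single i 1)) ↔ ∀ i j, M i j = M j i := by
    constructor <;> intro h i j <;> have := h i j <;> rw [hMc, hMc] at * <;> exact this
  -- the range condition
  have hright1 : (g ∈ LinearMap.range (Matrix.mulVecLin (symJ n * A))) ↔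
      ∃ x : Fin n → ℝ,
        ∀ s, Sum.elim (fun i => ∑ k, M i k * x k) (fun i => -x i) s = g s := by
    rw [LinearMap.mem_range]
    refine exists_congr fun x => ?_
    rw [Matrix.mulVecLin_apply, funext_iff]
    refine forall_congr' fun s => ?_
    have e : (symJ n * A).mulVec x s =
        Sum.elim (fun i => ∑ k, M i k * x k) (fun i => -x i) s := by
      cases s <;> simp [Matrix.mulVec, dotProduct, hJA]
    rw [e]
  -- the isotropy condition
  have hright2 : ((Aᵀ * symJ n * A) = 0) ↔ ∀ i j, M i j - M j i = 0 := by
    rw [← Matrix.ext_iff]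
    constructor
    · intro h i j; rw [← hATJA i j, h]; rfl
    · intro h i j; rw [hATJA i j, h i j]; rfl
  rw [hleft1, hleft2, hright1, hright2]
  exact key_alg n M g
end

section
/- Let A ⊆ ℝ^{2n} be open and F_1,...,F_k : A → ℝ independent, isotropic smooth functions (the Jacobian of (F_1,...,F_k) has rank k everywhere, and for every x ∈ A the kernel of the k×k matrix ({F_i,F_j}(x)) has dimension 2n−k). If F_{k+1} : A → ℝ is a smooth function such that F_1,...,F_k,F_{k+1} are independent (the Jacobian of (F_1,...,F_{k+1}) has rank k+1 everywhere), then F_1,...,F_k,F_{k+1} are also isotropic: for every x ∈ A the kernel of the (k+1)×(k+1) matrix ({F_i,F_j}(x))_{1≤i,j≤k+1} has dimension 2n−(k+1). -/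
open Matrix

/- ### Auxiliary lemmas -/

lemma symJ_neg_mul_self (n : ℕ) : (-(symJ n)) * (symJ n) = 1 := by
  rw [Matrix.neg_mul]
  simp [symJ, Matrix.fromBlocks_multiply]
  rw [← Matrix.fromBlocks_one]
  simp [Matrix.fromBlocks_neg]

lemma symJ_mulVecLin_injective (n : ℕ) : Function.Injective (symJ n).mulVecLin := by
  have hli : ∀ a, (-(symJ n)) *ᵥ ((symJ n) *ᵥ a) = a := by
    intro a
    rw [Matrix.mulVec_mulVec, symJ_neg_mul_self, Matrix.one_mulVec]
  intro a b hab
  have := congrArg ((-(symJ n)).mulVec) hab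
  simpa [Matrix.mulVecLin_apply, hli] using this

lemma mulVecLin_injective_of_rank {κ ι : Type*} [Fintype κ] [Fintype ι] [DecidableEq ι]
    (M : Matrix κ ι ℝ) (h : M.rank = Fintype.card ι) : Function.Injective M.mulVecLin := by
  rw [← LinearMap.ker_eq_bot]
  have h2 := LinearMap.finrank_range_add_finrank_ker M.mulVecLin
  rw [Matrix.rank] at h
  rw [Module.finrank_pi] at h2
  rw [← Submodule.finrank_eq_zero (R := ℝ)]
  omega

lemma finrank_ker_comp {M N P : Type*} [AddCommGroup M] [AddCommGroup N] [AddCommGroup P]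
    [Module ℝ M] [Module ℝ N] [Module ℝ P]
    (f : M →ₗ[ℝ] N) (g : N →ₗ[ℝ] P) (hf : Function.Injective f) :
    Module.finrank ℝ (LinearMap.ker (g ∘ₗ f)) =
      Module.finrank ℝ (LinearMap.range f ⊓ LinearMap.ker g : Submodule ℝ N) := by
  rw [LinearMap.ker_comp]
  rw [LinearEquiv.finrank_eq
    (Submodule.equivMapOfInjective f hf (Submodule.comap f (LinearMap.ker g)))]
  rw [Submodule.map_comap_eq]

lemma mjac_eq_grad {ι κ : Type*} [Fintype ι] [DecidableEq ι] [Fintype κ]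
    (f : κ → (ι → ℝ) → ℝ) (x : ι → ℝ) (hd : ∀ i, DifferentiableAt ℝ (f i) x) :
    mjac (fun y i => f i y) x = Matrix.of fun i j => mgrad (f i) x j := by
  ext i j
  simp only [mjac, mgrad, Matrix.of_apply]
  rw [fderiv_pi hd]
  simp

lemma poisson_matrix {n l : ℕ} (f : Fin l → ((Fin n ⊕ Fin n) → ℝ) → ℝ)
    (x : (Fin n ⊕ Fin n) → ℝ) :
    (Matrix.of fun i j : Fin l => poisson (f i) (f j) x) =
      (Matrix.of fun i j => mgrad (f i) x j) *
        (symJ n * (Matrix.of fun i j => mgrad (f i) x j)ᵀ) := by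
  ext i j
  simp [Matrix.mul_apply, poisson, dotProduct, Matrix.mulVec, Finset.mul_sum]

/-- Enlarging an independent isotropic family `F_1,…,F_k` by one function `F_{k+1}`
keeping independence yields again an isotropic family. -/
theorem isotropy_extends
    (n k : ℕ)
    (A : Set ((Fin n ⊕ Fin n) → ℝ)) (hA : IsOpen A)
    (F : Fin k → ((Fin n ⊕ Fin n) → ℝ) → ℝ)
    (hF : ∀ i, ContDiffOn ℝ (⊤ : ℕ∞) (F i) A)
    (hind : ∀ x ∈ A, (mjac (fun y i => F i y) x).rank = k)
    (hiso : ∀ x ∈ A, Module.finrank ℝ (LinearMap.ker (Matrix.mulVecLin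
      (Matrix.of fun i j : Fin k => poisson (F i) (F j) x))) = 2 * n - k)
    (G : ((Fin n ⊕ Fin n) → ℝ) → ℝ) (hG : ContDiffOn ℝ (⊤ : ℕ∞) G A)
    (Fhat : Fin (k + 1) → ((Fin n ⊕ Fin n) → ℝ) → ℝ)
    (hFhat : Fhat = Fin.snoc F G)
    (hindG : ∀ x ∈ A, (mjac (fun y i => Fhat i y) x).rank = k + 1) :
    ∀ x ∈ A, Module.finrank ℝ (LinearMap.ker (Matrix.mulVecLin
      (Matrix.of fun i j : Fin (k + 1) =>
        poisson (Fhat i) (Fhat j) x))) = 2 * n - (k + 1) := by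
  intro x hx
  have hmem : A ∈ nhds x := hA.mem_nhds hx
  have hdF : ∀ i, DifferentiableAt ℝ (F i) x := fun i =>
    ((hF i).contDiffAt hmem).differentiableAt (by simp)
  have hdG : DifferentiableAt ℝ G x := (hG.contDiffAt hmem).differentiableAt (by simp)
  have hdFhat : ∀ i, DifferentiableAt ℝ (Fhat i) x := by
    intro i
    refine Fin.lastCases ?_ ?_ i
    · simpa [hFhat] using hdG
    · intro j; simpa [hFhat] using hdF j
  -- the gradient matrices
  set D : Matrix (Fin (k + 1)) (Fin n ⊕ Fin n) ℝ :=
    Matrix.of fun i j => mgrad (Fhat i) x j with hD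
  set D0 : Matrix (Fin k) (Fin n ⊕ Fin n) ℝ :=
    Matrix.of fun i j => mgrad (F i) x j with hD0
  have hDrank : D.rank = k + 1 := by
    rw [hD, ← mjac_eq_grad Fhat x hdFhat]; exact hindG x hx
  have hD0rank : D0.rank = k := by
    rw [hD0, ← mjac_eq_grad F x hdF]; exact hind x hx
  -- injectivity of v ↦ J Dᵀ v
  have hDTinj : Function.Injective (Dᵀ).mulVecLin :=
    mulVecLin_injective_of_rank _ (by rw [Matrix.rank_transpose, hDrank]; simp)
  have hD0Tinj : Function.Injective (D0ᵀ).mulVecLin :=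
    mulVecLin_injective_of_rank _ (by rw [Matrix.rank_transpose, hD0rank]; simp)
  have hfinj : Function.Injective ((symJ n * Dᵀ).mulVecLin) := by
    rw [Matrix.mulVecLin_mul]
    exact (symJ_mulVecLin_injective n).comp hDTinj
  have hf0inj : Function.Injective ((symJ n * D0ᵀ).mulVecLin) := by
    rw [Matrix.mulVecLin_mul]
    exact (symJ_mulVecLin_injective n).comp hD0Tinj
  -- rewrite the poisson matrices
  have hkerP : Module.finrank ℝ (LinearMap.ker (Matrix.mulVecLin
      (Matrix.of fun i j : Fin (k + 1) => poisson (Fhat i) (Fhat j) x))) =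
      Module.finrank ℝ (LinearMap.range ((symJ n * Dᵀ).mulVecLin) ⊓
        LinearMap.ker D.mulVecLin : Submodule ℝ _) := by
    rw [poisson_matrix Fhat x, Matrix.mulVecLin_mul]
    exact finrank_ker_comp _ _ hfinj
  have hkerP0 : Module.finrank ℝ (LinearMap.ker (Matrix.mulVecLin
      (Matrix.of fun i j : Fin k => poisson (F i) (F j) x))) =
      Module.finrank ℝ (LinearMap.range ((symJ n * D0ᵀ).mulVecLin) ⊓
        LinearMap.ker D0.mulVecLin : Submodule ℝ _) := by
    rw [poisson_matrix F x, Matrix.mulVecLin_mul]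
    exact finrank_ker_comp _ _ hf0inj
  -- rank-nullity facts
  have hcard : Module.finrank ℝ ((Fin n ⊕ Fin n) → ℝ) = 2 * n := by
    rw [Module.finrank_pi]; simp; ring
  have hW0 : Module.finrank ℝ (LinearMap.ker D0.mulVecLin) = 2 * n - k ∧
      k ≤ 2 * n := by
    have h2 := LinearMap.finrank_range_add_finrank_ker D0.mulVecLin
    rw [hcard] at h2
    rw [Matrix.rank] at hD0rank
    omega
  have hW : Module.finrank ℝ (LinearMap.ker D.mulVecLin) = 2 * n - (k + 1) ∧
      k + 1 ≤ 2 * n := by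
    have h2 := LinearMap.finrank_range_add_finrank_ker D.mulVecLin
    rw [hcard] at h2
    rw [Matrix.rank] at hDrank
    omega
  -- from the isotropy hypothesis: ker D0 ≤ range (J D0ᵀ)
  have hsub0 : LinearMap.ker D0.mulVecLin ≤ LinearMap.range ((symJ n * D0ᵀ).mulVecLin) := by
    have heq : (LinearMap.range ((symJ n * D0ᵀ).mulVecLin) ⊓
        LinearMap.ker D0.mulVecLin : Submodule ℝ _) = LinearMap.ker D0.mulVecLin := by
      apply Submodule.eq_of_le_of_finrank_le inf_le_right
      rw [hW0.1, ← hiso x hx, hkerP0]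
    rw [← heq]
    exact inf_le_left
  -- ker D ≤ ker D0
  have hker_le : LinearMap.ker D.mulVecLin ≤ LinearMap.ker D0.mulVecLin := by
    intro v hv
    rw [LinearMap.mem_ker] at hv ⊢
    rw [Matrix.mulVecLin_apply] at hv ⊢
    funext i
    have := congrFun hv (Fin.castSucc i)
    simpa [Matrix.mulVec, dotProduct, hD, hD0, hFhat, Fin.snoc_castSucc] using this
  -- range (J D0ᵀ) ≤ range (J Dᵀ)
  have hrange_le : LinearMap.range ((symJ n * D0ᵀ).mulVecLin) ≤
      LinearMap.range ((symJ n * Dᵀ).mulVecLin) := by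
    rw [Matrix.mulVecLin_mul, Matrix.mulVecLin_mul, LinearMap.range_comp,
      LinearMap.range_comp]
    apply Submodule.map_mono
    rintro v ⟨c, rfl⟩
    refine ⟨Fin.snoc c 0, ?_⟩
    rw [Matrix.mulVecLin_apply, Matrix.mulVecLin_apply]
    funext j
    simp only [Matrix.mulVec, dotProduct, Matrix.transpose_apply, hD, hD0, Matrix.of_apply]
    rw [Fin.sum_univ_castSucc]
    simp [hFhat, Fin.snoc_castSucc]
  -- conclude
  have hfinal : (LinearMap.range ((symJ n * Dᵀ).mulVecLin) ⊓
      LinearMap.ker D.mulVecLin : Submodule ℝ _) = LinearMap.ker D.mulVecLin :=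
    inf_eq_right.mpr (le_trans hker_le (le_trans hsub0 hrange_le))
  rw [hkerP, hfinal, hW.1]
end
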